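/- arXiv:2205.11146 — 6 statements merged into one kernel-verified Lean document; each statement's English description precedes it below -/
import Mathlib

section
/- Let Γ be a countable group acting by measurable bijections on a σ-finite measure space (X, ℬ, μ), quasi-preserving μ, and suppose the diagonal action of Γ on (X × X, ℬ ⊗ ℬ, μ ⊗ μ), given by γ·(x,y) = (γx, γy), is ergodic. Let P ∈ ℬ be such that for every γ ∈ Γ, either γP ∩ P is (μ-)null or γP Δ P is (μ-)null. Then μ(P) = 0 or μ(X \ P) = 0. -/
open MeasureTheory Pointwise

/-- If the diagonal action of a countable group `Γ` on `(X × X, μ ⊗ μ)` is ergodic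
(weak mixing), then any measurable set `P` whose `Γ`-translates are each either almost
disjoint from `P` or almost equal to `P` must be null or conull. -/
theorem weak_mixing_no_nontrivial_tiling
    {Γ : Type*} [Group Γ] [Countable Γ]
    {X : Type*} [MeasurableSpace X] [MulAction Γ X]
    (μ : Measure X) [SigmaFinite μ]
    (hmeas : ∀ γ : Γ, Measurable fun x : X => γ • x)
    (hqp : ∀ (γ : Γ) (A : Set X), MeasurableSet A → (μ (γ • A) = 0 ↔ μ A = 0))
    (herg2 : ∀ S : Set (X × X), MeasurableSet S →
        (∀ γ : Γ, (fun p : X × X => (γ • p.1, γ • p.2)) '' S = S) →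
        (μ.prod μ) S = 0 ∨ (μ.prod μ) Sᶜ = 0)
    (P : Set X) (hP : MeasurableSet P)
    (htile : ∀ γ : Γ, μ ((γ • P) ∩ P) = 0 ∨ μ (symmDiff (γ • P) P) = 0) :
    μ P = 0 ∨ μ Pᶜ = 0 := by
  classical
  set f : Γ → X × X → X × X := fun γ p => (γ • p.1, γ • p.2) with hf
  have hfinv : ∀ γ : Γ, Function.LeftInverse (f γ⁻¹) (f γ) := by
    intro γ p; simp [hf]
  have hfinv' : ∀ γ : Γ, Function.RightInverse (f γ⁻¹) (f γ) := by
    intro γ p; simp [hf]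
  have himg : ∀ (γ : Γ) (T : Set (X × X)), f γ '' T = f γ⁻¹ ⁻¹' T := fun γ T =>
    congrFun (Set.image_eq_preimage_of_inverse (hfinv γ) (hfinv' γ)) T
  have hfm : ∀ γ : Γ, Measurable (f γ) := fun γ =>
    ((hmeas γ).comp measurable_fst).prodMk ((hmeas γ).comp measurable_snd)
  set S : Set (X × X) := ⋃ γ : Γ, f γ '' (P ×ˢ Pᶜ) with hS
  have hSm : MeasurableSet S := by
    apply MeasurableSet.iUnion
    intro γ
    rw [himg]
    exact hfm γ⁻¹ (hP.prod hP.compl)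
  have hcomp : ∀ γ δ : Γ, f γ '' (f δ '' (P ×ˢ Pᶜ)) = f (γ * δ) '' (P ×ˢ Pᶜ) := by
    intro γ δ
    rw [Set.image_image]
    congr 1
    funext p
    simp [hf, mul_smul]
  have hSinv : ∀ γ : Γ, f γ '' S = S := by
    intro γ
    rw [hS, Set.image_iUnion]
    ext p
    simp only [Set.mem_iUnion]
    constructor
    · rintro ⟨δ, hδ⟩
      rw [hcomp] at hδ
      exact ⟨γ * δ, hδ⟩
    · rintro ⟨δ, hδ⟩
      refine ⟨γ⁻¹ * δ, ?_⟩
      rw [hcomp, mul_inv_cancel_left]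
      exact hδ
  have hsub : P ×ˢ Pᶜ ⊆ S := by
    have h1 : f (1 : Γ) '' (P ×ˢ Pᶜ) = P ×ˢ Pᶜ := by
      have : f (1 : Γ) = id := by funext p; simp [hf]
      rw [this, Set.image_id]
    rw [hS]
    intro p hp
    exact Set.mem_iUnion.mpr ⟨1, by rw [h1]; exact hp⟩
  rcases herg2 S hSm hSinv with hnull | hconull
  · -- S null, so P × Pᶜ null
    have h0 : (μ.prod μ) (P ×ˢ Pᶜ) = 0 := measure_mono_null hsub hnull
    rw [Measure.prod_prod] at h0
    exact mul_eq_zero.mp h0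
  · -- S conull; show P × P null
    have himgprod : ∀ γ : Γ, f γ '' (P ×ˢ Pᶜ) = (γ • P) ×ˢ (γ • P)ᶜ := by
      intro γ
      rw [← Set.prod_image_image_eq, ← Set.smul_set_compl]
      rfl
    have hpiece : ∀ γ : Γ, (μ.prod μ) ((P ×ˢ P) ∩ f γ '' (P ×ˢ Pᶜ)) = 0 := by
      intro γ
      rw [himgprod, Set.prod_inter_prod, Measure.prod_prod]
      rcases htile γ with h | h
      · have : μ (P ∩ γ • P) = 0 := by rwa [Set.inter_comm]
        rw [this, zero_mul]
      · have hsub2 : P ∩ (γ • P)ᶜ ⊆ symmDiff (γ • P) P := by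
          intro x hx
          exact Or.inr ⟨hx.1, hx.2⟩
        have : μ (P ∩ (γ • P)ᶜ) = 0 := measure_mono_null hsub2 h
        rw [this, mul_zero]
    have hPPS : (μ.prod μ) ((P ×ˢ P) ∩ S) = 0 := by
      rw [hS, Set.inter_iUnion]
      exact measure_iUnion_null fun γ => hpiece γ
    have hPP : (μ.prod μ) (P ×ˢ P) = 0 := by
      refine le_antisymm ?_ zero_le
      have hsub3 : P ×ˢ P ⊆ ((P ×ˢ P) ∩ S) ∪ Sᶜ := by
        intro p hp
        by_cases hpS : p ∈ S
        · exact Or.inl ⟨hp, hpS⟩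
        · exact Or.inr hpS
      calc (μ.prod μ) (P ×ˢ P) ≤ (μ.prod μ) (((P ×ˢ P) ∩ S) ∪ Sᶜ) := measure_mono hsub3
        _ ≤ (μ.prod μ) ((P ×ˢ P) ∩ S) + (μ.prod μ) Sᶜ := measure_union_le _ _
        _ = 0 := by rw [hPPS, hconull, add_zero]
    rw [Measure.prod_prod] at hPP
    left
    exact (mul_self_eq_zero).mp hPP
end

section
/- With G, μ, Γ, P, Ã(g), A(g), S as in the tiling setup: for every g ∈ G, if Ã(g) is conull in G (equivalently, ν(A(g)) = ν(Γ\G)), then P = Pg up to a μ-null set, i.e. g ∈ S. Consequently S = {g ∈ G : ν(A(g)) = ν(Γ\G)}. -/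
noncomputable section

open MeasureTheory Manifold

/-- The right translate `P·g` of a subset of a group. -/
def rightTransl {G : Type*} [Group G] (P : Set G) (g : G) : Set G := (fun x => x * g) '' P

/-- `Ã(g) = ⋃_{γ ∈ Γ} γ·(P ∩ P·g)`. -/
def tildeA {G : Type*} [Group G] (Γ : Subgroup G) (P : Set G) (g : G) : Set G :=
  ⋃ γ ∈ Γ, (fun x => γ * x) '' (P ∩ rightTransl P g)

/-- The image `A(g)` of `Ã(g)` in the quotient `Γ\G`. -/
def qA {G : Type*} [Group G] (Γ : Subgroup G) (P : Set G) (g : G) :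
    Set (Quotient (MulAction.orbitRel ↥Γ G)) :=
  Quotient.mk (MulAction.orbitRel ↥Γ G) '' tildeA Γ P g

section AuxMem

variable {G : Type*} [Group G]

theorem mem_rightTransl' {P : Set G} {g x : G} : x ∈ rightTransl P g ↔ x * g⁻¹ ∈ P := by
  constructor
  · rintro ⟨p, hp, rfl⟩; simpa using hp
  · intro h; exact ⟨x * g⁻¹, h, by simp⟩

theorem mem_leftTransl' {P : Set G} {a x : G} : x ∈ (fun y => a * y) '' P ↔ a⁻¹ * x ∈ P := by
  constructor
  · rintro ⟨p, hp, rfl⟩; simpa using hp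
  · intro h; exact ⟨a⁻¹ * x, h, by simp⟩

theorem mem_tildeA' {Γ : Subgroup G} {P : Set G} {g x : G} :
    x ∈ tildeA Γ P g ↔ ∃ γ ∈ Γ, γ⁻¹ * x ∈ P ∧ (γ⁻¹ * x) * g⁻¹ ∈ P := by
  simp only [tildeA, Set.mem_iUnion, exists_prop]
  constructor
  · rintro ⟨γ, hγ, hx⟩
    rw [mem_leftTransl'] at hx
    exact ⟨γ, hγ, hx.1, mem_rightTransl'.mp hx.2⟩
  · rintro ⟨γ, hγ, h1, h2⟩
    exact ⟨γ, hγ, mem_leftTransl'.mpr ⟨h1, mem_rightTransl'.mpr h2⟩⟩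

theorem tildeA_mul_mem {Γ : Subgroup G} {P : Set G} {g : G} {a : G} (ha : a ∈ Γ) {x : G}
    (hx : x ∈ tildeA Γ P g) : a * x ∈ tildeA Γ P g := by
  rw [mem_tildeA'] at hx ⊢
  obtain ⟨γ, hγ, h1, h2⟩ := hx
  have e : (a * γ)⁻¹ * (a * x) = γ⁻¹ * x := by group
  exact ⟨a * γ, Γ.mul_mem ha hγ, by rw [e]; exact h1, by rw [e]; exact h2⟩

end AuxMem

section SigmaCompact

open scoped Pointwise

theorem aux_sigmaCompact {G : Type*} [TopologicalSpace G] [Group G] [IsTopologicalGroup G]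
    [LocallyCompactSpace G] [ConnectedSpace G] : SigmaCompactSpace G := by
  obtain ⟨K, hKc, hK1⟩ := exists_compact_mem_nhds (1 : G)
  set L : Set G := (K ∪ K⁻¹) ∪ {1} with hL
  have hLc : IsCompact L := (hKc.union hKc.inv).union isCompact_singleton
  have hLsymm : L⁻¹ = L := by
    simp only [hL, Set.union_inv, inv_inv, Set.inv_singleton, inv_one]
    rw [Set.union_comm K⁻¹ K]
  have hpowc : ∀ n : ℕ, IsCompact (L ^ n) := by
    intro n; induction n with
    | zero => rw [pow_zero, ← Set.singleton_one]; exact isCompact_singleton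
    | succ n ih => rw [pow_succ]; exact ih.mul hLc
  have hH : ∃ H : Subgroup G, (H : Set G) = ⋃ n, L ^ n := by
    refine ⟨⟨⟨⟨⋃ n, L ^ n, ?_⟩, ?_⟩, ?_⟩, rfl⟩
    · rintro a b ⟨_, ⟨m, rfl⟩, ha⟩ ⟨_, ⟨n, rfl⟩, hb⟩
      exact Set.mem_iUnion.2 ⟨m + n, by rw [pow_add]; exact Set.mul_mem_mul ha hb⟩
    · exact Set.mem_iUnion.2 ⟨0, by simp⟩
    · rintro a ⟨_, ⟨n, rfl⟩, ha⟩
      refine Set.mem_iUnion.2 ⟨n, ?_⟩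
      rw [← hLsymm, inv_pow]
      exact Set.inv_mem_inv.2 ha
  obtain ⟨H, hHc⟩ := hH
  have hopen : IsOpen (H : Set G) := by
    apply Subgroup.isOpen_of_mem_nhds
    apply Filter.mem_of_superset hK1
    intro x hx
    rw [hHc]
    exact Set.mem_iUnion.2 ⟨1, by rw [pow_one]; exact Or.inl (Or.inl hx)⟩
  have hclosed : IsClosed (H : Set G) := H.isClosed_of_isOpen hopen
  have huniv : (H : Set G) = Set.univ :=
    IsClopen.eq_univ ⟨hclosed, hopen⟩ ⟨1, H.one_mem⟩
  exact ⟨⟨fun n => L ^ n, hpowc, by rw [← hHc, huniv]⟩⟩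

end SigmaCompact

/-- A Haar measure is quasi-invariant under right translations: right translates of null
measurable sets are null. -/
theorem null_rightTransl {G : Type*} [TopologicalSpace G] [Group G] [IsTopologicalGroup G]
    [MeasurableSpace G] [BorelSpace G] [LocallyCompactSpace G] [SecondCountableTopology G]
    (μ : Measure G) [μ.IsHaarMeasure] {s : Set G} (hs : MeasurableSet s) (h : μ s = 0) (g : G) :
    μ (rightTransl s g) = 0 := by
  have heq : rightTransl s g = (fun x => x * g⁻¹) ⁻¹' s := by
    ext x; rw [mem_rightTransl']; rfl
  rw [heq]
  have hmap := Measure.isMulLeftInvariant_eq_smul (Measure.map (· * g⁻¹) μ) μ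
  have h2 : Measure.map (· * g⁻¹) μ s = μ ((fun x => x * g⁻¹) ⁻¹' s) :=
    Measure.map_apply (measurable_mul_const g⁻¹) hs
  rw [← h2, hmap, Measure.smul_apply, h, smul_zero]

/-- In the tiling setup: if `Ã(g)` is conull in `G` then `P = Pg` mod `0`, i.e. `g ∈ S`;
consequently `S = {g : ν(A(g)) = ν(Γ\G)}`, where `ν` is the finite measure on `Γ\G`
induced by the Haar measure `μ` via a fundamental domain `D` of `Γ`. -/
theorem tiling_conull_iff_mem_S
    {E : Type*} [NormedAddCommGroup E] [NormedSpace ℝ E] [FiniteDimensional ℝ E]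
    {G : Type*} [TopologicalSpace G] [ChartedSpace E G] [Group G] [IsTopologicalGroup G]
    [LieGroup 𝓘(ℝ, E) (⊤ : ℕ∞) G] [ConnectedSpace G]
    [Finite (Subgroup.center G)]
    [LieAlgebra.IsSimple ℝ (LeftInvariantDerivation 𝓘(ℝ, E) G)]
    [MeasurableSpace G] [BorelSpace G] [LocallyCompactSpace G]
    (μ : Measure G) [μ.IsHaarMeasure]
    (Γ : Subgroup G) (hΓdisc : DiscreteTopology ↥Γ)
    (D : Set G) (hD : IsFundamentalDomain ↥Γ D μ) (hDfin : μ D < ⊤)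
    (P : Set G) (hP : MeasurableSet P)
    (htile : ∀ γ₁ ∈ Γ, ∀ γ₂ ∈ Γ,
      μ (symmDiff ((fun g => γ₁ * g) '' P) ((fun g => γ₂ * g) '' P)) = 0 ∨
      μ (((fun g => γ₁ * g) '' P) ∩ ((fun g => γ₂ * g) '' P)) = 0)
    (hcover : μ (⋃ γ ∈ Γ, (fun g => γ * g) '' P)ᶜ = 0) :
    (∀ g : G, μ (tildeA Γ P g)ᶜ = 0 → μ (symmDiff P (rightTransl P g)) = 0) ∧
    {g : G | μ (symmDiff P (rightTransl P g)) = 0} =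
      {g : G | (Measure.map (Quotient.mk (MulAction.orbitRel ↥Γ G)) (μ.restrict D)) (qA Γ P g) =
        (Measure.map (Quotient.mk (MulAction.orbitRel ↥Γ G)) (μ.restrict D)) Set.univ} := by
  classical
  haveI hsig : SigmaCompactSpace G := aux_sigmaCompact
  haveI hsecond : SecondCountableTopology G := ChartedSpace.secondCountable_of_sigmaCompact E G
  haveI := hΓdisc
  haveI hcountΓ : Countable ↥Γ := TopologicalSpace.separableSpace_iff_countable.mp inferInstance
  -- measurability helpers
  have hPg : ∀ g : G, MeasurableSet (rightTransl P g) := by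
    intro g
    have h : rightTransl P g = (fun x => x * g⁻¹) ⁻¹' P := by
      ext x; rw [mem_rightTransl']; rfl
    rw [h]; exact (measurable_mul_const g⁻¹) hP
  have hT : ∀ (a : G) (s : Set G), MeasurableSet s → MeasurableSet ((fun y => a * y) '' s) := by
    intro a s hs
    have h : (fun y => a * y) '' s = (fun y => a⁻¹ * y) ⁻¹' s := by
      ext x; rw [mem_leftTransl']; rfl
    rw [h]; exact (measurable_const_mul a⁻¹) hs
  have hΓsetc : (Γ : Set G).Countable := Set.countable_coe_iff.mpr hcountΓ
  have htAmeas : ∀ g : G, MeasurableSet (tildeA Γ P g) := by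
    intro g
    exact MeasurableSet.biUnion hΓsetc fun γ _ => hT γ _ (hP.inter (hPg g))
  -- translation of null sets on the left
  have hlnull : ∀ (a : G) (s : Set G), μ s = 0 → μ ((fun y => a * y) '' s) = 0 := by
    intro a s hs
    have h : (fun y => a * y) '' s = (fun y => a⁻¹ * y) ⁻¹' s := by
      ext x; rw [mem_leftTransl']; rfl
    rw [h, measure_preimage_mul]
    exact hs
  -- Part 1
  have part1 : ∀ g : G, μ (tildeA Γ P g)ᶜ = 0 → μ (symmDiff P (rightTransl P g)) = 0 := by
    intro g htA
    have hone : (fun x : G => (1 : G) * x) '' P = P := by simp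
    have htile' : ∀ γ : ↥Γ, μ (symmDiff ((fun y => (γ : G) * y) '' P) P) = 0 ∨
        μ (((fun y => (γ : G) * y) '' P) ∩ P) = 0 := by
      intro γ
      have h := htile (γ : G) γ.2 1 Γ.one_mem
      rwa [hone] at h
    set B : ↥Γ → Set G := fun γ =>
      if μ (symmDiff ((fun y => (γ : G) * y) '' P) P) = 0
      then symmDiff ((fun y => (γ : G) * y) '' P) P
      else ((fun y => (γ : G) * y) '' P) ∩ P with hBdef
    have hBmeas : ∀ γ : ↥Γ, MeasurableSet (B γ) := by
      intro γ
      by_cases hc : μ (symmDiff ((fun y => (γ : G) * y) '' P) P) = 0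
      · rw [hBdef]; simp only [if_pos hc]
        exact (hT _ _ hP).symmDiff hP
      · rw [hBdef]; simp only [if_neg hc]
        exact (hT _ _ hP).inter hP
    have hBnull : ∀ γ : ↥Γ, μ (B γ) = 0 := by
      intro γ
      by_cases hc : μ (symmDiff ((fun y => (γ : G) * y) '' P) P) = 0
      · rw [hBdef]; simp only [if_pos hc]; exact hc
      · rw [hBdef]; simp only [if_neg hc]
        exact (htile' γ).resolve_left hc
    have hkey : symmDiff P (rightTransl P g) ⊆
        (tildeA Γ P g)ᶜ ∪ ⋃ γ : ↥Γ, (B γ ∪ rightTransl (B γ) g) := by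
      intro x hx
      by_cases hxA : x ∈ tildeA Γ P g
      · right
        obtain ⟨γ0, hγ0, h1, h2⟩ := mem_tildeA'.mp hxA
        refine Set.mem_iUnion.2 ⟨⟨γ0, hγ0⟩, ?_⟩
        rw [Set.mem_symmDiff] at hx
        by_cases hc : μ (symmDiff ((fun y => ((⟨γ0, hγ0⟩ : ↥Γ) : G) * y) '' P) P) = 0
        · have hB : B ⟨γ0, hγ0⟩ = symmDiff ((fun y => γ0 * y) '' P) P := by
            rw [hBdef]; simp only [if_pos hc]
          rw [hB]
          rcases hx with ⟨hxP, hxQ⟩ | ⟨hxQ, hxP⟩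
          · right
            rw [mem_rightTransl', Set.mem_symmDiff]
            left
            refine ⟨mem_leftTransl'.mpr (by rw [← mul_assoc]; exact h2), fun hP' => ?_⟩
            exact hxQ (mem_rightTransl'.mpr hP')
          · left
            rw [Set.mem_symmDiff]
            exact Or.inl ⟨mem_leftTransl'.mpr h1, hxP⟩
        · have hB : B ⟨γ0, hγ0⟩ = ((fun y => γ0 * y) '' P) ∩ P := by
            rw [hBdef]; simp only [if_neg hc]
          rw [hB]
          rcases hx with ⟨hxP, hxQ⟩ | ⟨hxQ, hxP⟩
          · exact Or.inl ⟨mem_leftTransl'.mpr h1, hxP⟩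
          · right
            rw [mem_rightTransl']
            exact ⟨mem_leftTransl'.mpr (by rw [← mul_assoc]; exact h2),
              mem_rightTransl'.mp hxQ⟩
      · left; exact hxA
    refine measure_mono_null hkey (measure_union_null htA (measure_iUnion_null fun γ => ?_))
    exact measure_union_null (hBnull γ) (null_rightTransl μ (hBmeas γ) (hBnull γ) g)
  refine ⟨part1, ?_⟩
  -- Part 2
  have hmk : Measurable (Quotient.mk (MulAction.orbitRel ↥Γ G)) := measurable_quotient_mk''
  have hsat : ∀ g : G,
      (Quotient.mk (MulAction.orbitRel ↥Γ G)) ⁻¹' (qA Γ P g) = tildeA Γ P g := by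
    intro g
    ext x
    simp only [qA, Set.mem_preimage, Set.mem_image]
    constructor
    · rintro ⟨y, hy, hxy⟩
      have h2 : y ∈ MulAction.orbit (↥Γ) x := Quotient.exact hxy
      obtain ⟨γ, hγ⟩ := MulAction.mem_orbit_iff.mp h2
      have hinv : ((γ⁻¹ : ↥Γ) : G) * y ∈ tildeA Γ P g := tildeA_mul_mem (γ⁻¹ : ↥Γ).2 hy
      have hxeq : ((γ⁻¹ : ↥Γ) : G) * y = x := by
        rw [← hγ]
        show ((γ⁻¹ : ↥Γ) : G) * ((γ : G) * x) = x
        rw [← mul_assoc]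
        simp
      rwa [hxeq] at hinv
    · intro hx
      exact ⟨x, hx, rfl⟩
  have hqAmeas : ∀ g : G, MeasurableSet (qA Γ P g) := by
    intro g
    refine measurableSet_quotient.mpr ?_
    show MeasurableSet ((Quotient.mk (MulAction.orbitRel ↥Γ G)) ⁻¹' (qA Γ P g))
    rw [hsat g]
    exact htAmeas g
  have hmapapp : ∀ g : G,
      Measure.map (Quotient.mk (MulAction.orbitRel ↥Γ G)) (μ.restrict D) (qA Γ P g)
        = μ (tildeA Γ P g ∩ D) := by
    intro g
    rw [Measure.map_apply hmk (hqAmeas g), hsat g, Measure.restrict_apply (htAmeas g)]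
  have hmapuniv :
      Measure.map (Quotient.mk (MulAction.orbitRel ↥Γ G)) (μ.restrict D) Set.univ = μ D := by
    rw [Measure.map_apply hmk MeasurableSet.univ, Set.preimage_univ,
      Measure.restrict_apply MeasurableSet.univ, Set.univ_inter]
  ext g
  simp only [Set.mem_setOf_eq, hmapapp g, hmapuniv]
  constructor
  · intro h
    have hPQ : μ (P \ rightTransl P g) = 0 :=
      measure_mono_null (fun x hx => Set.mem_symmDiff.mpr (Or.inl ⟨hx.1, hx.2⟩)) h
    have hconull : μ (tildeA Γ P g)ᶜ = 0 := by
      have hsub : (tildeA Γ P g)ᶜ ⊆ (⋃ γ ∈ Γ, (fun x => γ * x) '' P)ᶜ ∪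
          ⋃ γ : ↥Γ, (fun y => (γ : G) * y) '' (P \ rightTransl P g) := by
        intro x hx
        by_cases hxU : x ∈ ⋃ γ ∈ Γ, (fun x => γ * x) '' P
        · right
          simp only [Set.mem_iUnion, exists_prop] at hxU
          obtain ⟨γ0, hγ0, hxγ⟩ := hxU
          rw [mem_leftTransl'] at hxγ
          refine Set.mem_iUnion.2 ⟨⟨γ0, hγ0⟩, mem_leftTransl'.mpr ⟨hxγ, fun hQ' => ?_⟩⟩
          exact hx (mem_tildeA'.mpr ⟨γ0, hγ0, hxγ, by exact mem_rightTransl'.mp hQ'⟩)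
        · left; exact hxU
      refine measure_mono_null hsub
        (measure_union_null hcover (measure_iUnion_null fun γ => hlnull _ _ hPQ))
    have hD1 : μ (D \ tildeA Γ P g) = 0 :=
      measure_mono_null (fun x hx => hx.2) hconull
    have hsum := measure_inter_add_diff (μ := μ) D (htAmeas g)
    rw [hD1, add_zero] at hsum
    rw [Set.inter_comm]
    exact hsum
  · intro h
    apply part1 g
    rw [Set.inter_comm] at h
    have hsum := measure_inter_add_diff (μ := μ) D (htAmeas g)
    rw [h] at hsum
    have hD1 : μ (D \ tildeA Γ P g) = 0 := by
      have h0 : μ D + μ (D \ tildeA Γ P g) = μ D + 0 := by rw [add_zero]; exact hsum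
      exact (ENNReal.add_right_inj hDfin.ne).mp h0
    have hsub : (tildeA Γ P g)ᶜ ⊆ {x : G | ¬ ∃ γ : ↥Γ, γ • x ∈ D} ∪
        ⋃ γ : ↥Γ, (fun y => ((γ : G))⁻¹ * y) '' (D \ tildeA Γ P g) := by
      intro x hx
      by_cases hxD : ∃ γ : ↥Γ, γ • x ∈ D
      · right
        obtain ⟨γ, hγ⟩ := hxD
        refine Set.mem_iUnion.2 ⟨γ, mem_leftTransl'.mpr ?_⟩
        rw [inv_inv]
        refine ⟨hγ, fun hmem => hx ?_⟩
        have hmem2 : ((γ⁻¹ : ↥Γ) : G) * ((γ : G) * x) ∈ tildeA Γ P g :=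
          tildeA_mul_mem (γ⁻¹ : ↥Γ).2 hmem
        rw [← mul_assoc] at hmem2
        simpa using hmem2
      · left; exact hxD
    refine measure_mono_null hsub (measure_union_null ?_
      (measure_iUnion_null fun γ => hlnull _ _ hD1))
    exact ae_iff.mp hD.ae_covers
end
end

section
/- With G, μ, Γ, P, Ã(g), A(g), S as in the tiling setup (Mautner phenomenon): let a ∈ S and let g ∈ G be such that aⁿ g a⁻ⁿ converges to the identity element e of G as n → ∞. Then g ∈ S. -/
noncomputable section

open MeasureTheory Manifold Filter Topology

namespace TilingMautner

open Set
open scoped symmDiff Pointwise NNReal ENNReal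
set_option linter.unusedSectionVars false

/-- A topological group which is a charted space over a T2 space is T2. -/
lemma t2space_of_chartedSpace {E G : Type*} [TopologicalSpace E] [T2Space E]
    [TopologicalSpace G] [ChartedSpace E G] [Group G] [IsTopologicalGroup G] : T2Space G := by
  apply IsTopologicalGroup.t2Space_of_one_sep
  intro x hx
  set e := chartAt E (1 : G) with he
  have h1 : (1 : G) ∈ e.source := mem_chart_source E 1
  by_cases hxe : x ∈ e.source
  · have hne : e x ≠ e 1 := fun h => hx (e.injOn hxe h1 h)
    refine ⟨e.source ∩ e ⁻¹' {e x}ᶜ, ?_, ?_⟩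
    · exact (e.isOpen_inter_preimage (isOpen_compl_singleton)).mem_nhds ⟨h1, hne.symm⟩
    · rintro ⟨-, hmem⟩
      exact hmem rfl
  · exact ⟨e.source, e.open_source.mem_nhds h1, hxe⟩

/-- A connected locally compact topological group is σ-compact. -/
lemma sigmaCompact_of_connected {G : Type*} [TopologicalSpace G] [Group G]
    [IsTopologicalGroup G] [LocallyCompactSpace G] [ConnectedSpace G] : SigmaCompactSpace G := by
  obtain ⟨K, hK, hK1⟩ := exists_compact_mem_nhds (1 : G)
  set S : Set G := K ∪ K⁻¹ with hS
  have hScomp : IsCompact S := hK.union hK.inv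
  have hSsymm : S⁻¹ = S := by
    ext y; simp [hS, or_comm]
  have hsub : (K : Set G) ⊆ ↑(Subgroup.closure S) := fun x hx =>
    Subgroup.subset_closure (Or.inl hx)
  have hopen : IsOpen ((Subgroup.closure S : Subgroup G) : Set G) :=
    Subgroup.isOpen_of_mem_nhds _ (Filter.mem_of_superset hK1 hsub)
  have huniv : ((Subgroup.closure S : Subgroup G) : Set G) = Set.univ :=
    IsClopen.eq_univ ⟨(Subgroup.closure S).isClosed_of_isOpen hopen, hopen⟩
      ⟨1, (Subgroup.closure S).one_mem⟩
  have hpow : ∀ n : ℕ, IsCompact (S ^ n) := by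
    intro n
    induction n with
    | zero =>
        rw [pow_zero]
        have : (1 : Set G) = {(1 : G)} := by ext y; simp [Set.mem_one]
        rw [this]
        exact isCompact_singleton
    | succ n ih => rw [pow_succ]; exact ih.mul hScomp
  refine ⟨⟨fun n => S ^ n, hpow, ?_⟩⟩
  apply Set.eq_univ_of_forall
  intro x
  have hxmem : x ∈ Subgroup.closure S := by
    have := Set.mem_univ x
    rw [← huniv] at this
    exact this
  have : ∃ n : ℕ, x ∈ S ^ n := by
    refine Subgroup.closure_induction (fun y hy => ⟨1, by simpa [pow_one] using hy⟩)
      ⟨0, by simp [pow_zero]⟩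
      (fun y z _ _ ⟨m, hm⟩ ⟨n, hn⟩ => ⟨m + n, by rw [pow_add]; exact Set.mul_mem_mul hm hn⟩)
      (fun y _ ⟨n, hn⟩ => ⟨n, by
        have hinv : (S ^ n)⁻¹ = S ^ n := by rw [← inv_pow, hSsymm]
        rw [← hinv]
        exact Set.inv_mem_inv.mpr hn⟩) hxmem
  obtain ⟨n, hn⟩ := this
  exact Set.mem_iUnion.2 ⟨n, hn⟩

variable {G : Type*} [Group G] [TopologicalSpace G] [IsTopologicalGroup G]
  [MeasurableSpace G] [BorelSpace G]

/-- Right translate `X·h`, as a preimage. -/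
def rT (h : G) (X : Set G) : Set G := (fun x => x * h⁻¹) ⁻¹' X

/-- Left translate `h·X`, as a preimage. -/
def lT (h : G) (X : Set G) : Set G := (fun x => h⁻¹ * x) ⁻¹' X

lemma mem_rT {h x : G} {X : Set G} : x ∈ rT h X ↔ x * h⁻¹ ∈ X := Iff.rfl
lemma mem_lT {h x : G} {X : Set G} : x ∈ lT h X ↔ h⁻¹ * x ∈ X := Iff.rfl

lemma rT_rT (u v : G) (X : Set G) : rT u (rT v X) = rT (v * u) X := by
  ext x; simp [rT, mul_assoc]

lemma lT_lT (u v : G) (X : Set G) : lT u (lT v X) = lT (u * v) X := by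
  ext x; simp [lT, mul_assoc]

lemma lT_rT (u v : G) (X : Set G) : lT u (rT v X) = rT v (lT u X) := by
  ext x; simp [lT, rT, mul_assoc]

lemma rT_one (X : Set G) : rT 1 X = X := by ext x; simp [rT]

lemma lT_one (X : Set G) : lT 1 X = X := by ext x; simp [lT]

lemma rT_symmDiff (h : G) (X Y : Set G) : rT h (X ∆ Y) = rT h X ∆ rT h Y := rfl
lemma lT_symmDiff (h : G) (X Y : Set G) : lT h (X ∆ Y) = lT h X ∆ lT h Y := rfl
lemma rT_inter (h : G) (X Y : Set G) : rT h (X ∩ Y) = rT h X ∩ rT h Y := rfl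
lemma lT_inter (h : G) (X Y : Set G) : lT h (X ∩ Y) = lT h X ∩ lT h Y := rfl
lemma rT_union (h : G) (X Y : Set G) : rT h (X ∪ Y) = rT h X ∪ rT h Y := rfl
lemma rT_diff (h : G) (X Y : Set G) : rT h (X \ Y) = rT h X \ rT h Y := rfl
lemma lT_diff (h : G) (X Y : Set G) : lT h (X \ Y) = lT h X \ lT h Y := rfl
lemma rT_compl (h : G) (X : Set G) : rT h Xᶜ = (rT h X)ᶜ := rfl
lemma lT_compl (h : G) (X : Set G) : lT h Xᶜ = (lT h X)ᶜ := rfl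
lemma rT_iUnion {ι : Sort*} (h : G) (f : ι → Set G) : rT h (⋃ i, f i) = ⋃ i, rT h (f i) :=
  Set.preimage_iUnion
lemma lT_iUnion {ι : Sort*} (h : G) (f : ι → Set G) : lT h (⋃ i, f i) = ⋃ i, lT h (f i) :=
  Set.preimage_iUnion

lemma rT_mono (h : G) {X Y : Set G} (hXY : X ⊆ Y) : rT h X ⊆ rT h Y :=
  Set.preimage_mono hXY
lemma lT_mono (h : G) {X Y : Set G} (hXY : X ⊆ Y) : lT h X ⊆ lT h Y :=
  Set.preimage_mono hXY

lemma rT_image (h : G) (X : Set G) : rT h X = (fun x => x * h) '' X := by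
  rw [Set.image_mul_right]; rfl

lemma lT_image (h : G) (X : Set G) : lT h X = (fun x => h * x) '' X := by
  rw [Set.image_mul_left]; rfl

variable (μ : Measure G)

lemma meas_lT [μ.IsMulLeftInvariant] (h : G) (X : Set G) : μ (lT h X) = μ X :=
  measure_preimage_mul μ h⁻¹ X

lemma lT_ae [μ.IsMulLeftInvariant] (h : G) {X Y : Set G} (hXY : X =ᵐ[μ] Y) :
    lT h X =ᵐ[μ] lT h Y := by
  rw [← measure_symmDiff_eq_zero_iff] at hXY ⊢
  rw [← lT_symmDiff, meas_lT]
  exact hXY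

lemma lT_nm [μ.IsMulLeftInvariant] (h : G) {X : Set G} (hX : NullMeasurableSet X μ) :
    NullMeasurableSet (lT h X) μ := by
  have hae : lT h (toMeasurable μ X) =ᵐ[μ] lT h X := lT_ae μ h (hX.toMeasurable_ae_eq)
  exact (((measurableSet_toMeasurable μ X).preimage
    ((continuous_mul_left h⁻¹).measurable)).nullMeasurableSet).congr hae

section rtq

variable {μ}
variable (hrt : ∀ (u : G) (X : Set G), μ X = 0 → μ (rT u X) = 0)

include hrt

lemma rT_ae (u : G) {X Y : Set G} (hXY : X =ᵐ[μ] Y) : rT u X =ᵐ[μ] rT u Y := by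
  rw [← measure_symmDiff_eq_zero_iff] at hXY ⊢
  rw [← rT_symmDiff]
  exact hrt u _ hXY

lemma rT_nm (u : G) {X : Set G} (hX : NullMeasurableSet X μ) :
    NullMeasurableSet (rT u X) μ := by
  have hae : rT u (toMeasurable μ X) =ᵐ[μ] rT u X := rT_ae hrt u (hX.toMeasurable_ae_eq)
  exact (((measurableSet_toMeasurable μ X).preimage
    ((continuous_mul_right u⁻¹).measurable)).nullMeasurableSet).congr hae

end rtq

/-- Transfer of a measure computation between two "fundamental-domain-like" families. -/
lemma transfer [μ.IsMulLeftInvariant] {ι : Type*} [Countable ι] (e : ι → G)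
    (D₁ D₂ Y : Set G)
    (hD₁nm : NullMeasurableSet D₁ μ) (hD₂nm : NullMeasurableSet D₂ μ)
    (hD₂m : ∀ i, NullMeasurableSet (lT (e i) D₂) μ)
    (hD₁m : ∀ i, NullMeasurableSet (lT (e i)⁻¹ D₁) μ)
    (hYm : NullMeasurableSet Y μ)
    (hcov₂ : μ (⋃ i, lT (e i) D₂)ᶜ = 0)
    (hdis₂ : Pairwise (Function.onFun (AEDisjoint μ) (fun i => lT (e i) D₂)))
    (hcov₁ : μ (⋃ i, lT (e i)⁻¹ D₁)ᶜ = 0)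
    (hdis₁ : Pairwise (Function.onFun (AEDisjoint μ) (fun i => lT (e i)⁻¹ D₁)))
    (hY : ∀ i, lT (e i)⁻¹ Y =ᵐ[μ] Y) :
    μ (D₁ ∩ Y) = μ (D₂ ∩ Y) := by
  have step : ∀ i, μ ((D₁ ∩ Y) ∩ lT (e i) D₂) = μ (lT (e i)⁻¹ D₁ ∩ (Y ∩ D₂)) := by
    intro i
    have h1 : μ ((D₁ ∩ Y) ∩ lT (e i) D₂)
        = μ (lT (e i)⁻¹ ((D₁ ∩ Y) ∩ lT (e i) D₂)) := (meas_lT μ _ _).symm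
    have h2 : lT (e i)⁻¹ ((D₁ ∩ Y) ∩ lT (e i) D₂)
        = (lT (e i)⁻¹ D₁ ∩ lT (e i)⁻¹ Y) ∩ D₂ := by
      rw [lT_inter, lT_inter, lT_lT, inv_mul_cancel, lT_one]
    have h3 : ((lT (e i)⁻¹ D₁ ∩ lT (e i)⁻¹ Y) ∩ D₂ : Set G)
        =ᵐ[μ] ((lT (e i)⁻¹ D₁ ∩ Y) ∩ D₂ : Set G) :=
      ((EventuallyEq.refl _ _).inter (hY i)).inter (EventuallyEq.refl _ _)
    rw [h1, h2, measure_congr h3, Set.inter_assoc]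
  calc μ (D₁ ∩ Y) = μ ((D₁ ∩ Y) ∩ ⋃ i, lT (e i) D₂) := (measure_inter_conull hcov₂).symm
    _ = μ (⋃ i, (D₁ ∩ Y) ∩ lT (e i) D₂) := by rw [Set.inter_iUnion]
    _ = ∑' i, μ ((D₁ ∩ Y) ∩ lT (e i) D₂) := by
        refine measure_iUnion₀ (hdis₂.mono fun i j hij => hij.mono ?_ ?_) (fun i => ?_)
        · exact Set.inter_subset_right
        · exact Set.inter_subset_right
        · exact ((hD₁nm.inter hYm).inter (hD₂m i))
    _ = ∑' i, μ (lT (e i)⁻¹ D₁ ∩ (Y ∩ D₂)) := by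
        exact tsum_congr step
    _ = μ (⋃ i, lT (e i)⁻¹ D₁ ∩ (Y ∩ D₂)) := by
        refine (measure_iUnion₀ (hdis₁.mono fun i j hij => hij.mono ?_ ?_) (fun i => ?_)).symm
        · exact Set.inter_subset_left
        · exact Set.inter_subset_left
        · exact ((hD₁m i).inter (hYm.inter hD₂nm))
    _ = μ ((⋃ i, lT (e i)⁻¹ D₁) ∩ (Y ∩ D₂)) := by rw [Set.iUnion_inter]
    _ = μ (Y ∩ D₂) := by rw [Set.inter_comm]; exact measure_inter_conull hcov₁
    _ = μ (D₂ ∩ Y) := by rw [Set.inter_comm]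

/-- Detection: a set which is a.e.-invariant under a family covering the space
and which is null on a "fundamental domain" is null. -/
lemma detect [μ.IsMulLeftInvariant] {ι : Type*} [Countable ι] (e : ι → G)
    (W D₀ : Set G)
    (hcov : μ (⋃ i, lT (e i) D₀)ᶜ = 0)
    (hW : ∀ i, lT (e i)⁻¹ W =ᵐ[μ] W)
    (h0 : μ (D₀ ∩ W) = 0) : μ W = 0 := by
  have hsub : W ⊆ (⋃ i, lT (e i) D₀ ∩ W) ∪ (⋃ i, lT (e i) D₀)ᶜ := by
    intro x hx
    by_cases hmem : x ∈ ⋃ i, lT (e i) D₀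
    · obtain ⟨s, ⟨i, rfl⟩, hs⟩ := hmem
      exact Or.inl (Set.mem_iUnion.2 ⟨i, hs, hx⟩)
    · exact Or.inr hmem
  refine measure_mono_null hsub (measure_union_null (measure_iUnion_null fun i => ?_) hcov)
  have h1 : μ (lT (e i) D₀ ∩ W) = μ (lT (e i)⁻¹ (lT (e i) D₀ ∩ W)) := (meas_lT μ _ _).symm
  have h2 : lT (e i)⁻¹ (lT (e i) D₀ ∩ W) = D₀ ∩ lT (e i)⁻¹ W := by
    rw [lT_inter, lT_lT, inv_mul_cancel, lT_one]
  have h3 : (D₀ ∩ lT (e i)⁻¹ W : Set G) =ᵐ[μ] (D₀ ∩ W : Set G) :=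
    (EventuallyEq.refl _ _).inter (hW i)
  rw [h1, h2, measure_congr h3, h0]

/-- For every `h`, right translation scales a Haar measure by a constant. -/
lemma exists_rT_factor [LocallyCompactSpace G] [SecondCountableTopology G]
    [μ.IsHaarMeasure] (h : G) :
    ∃ c : ℝ≥0, ∀ X : Set G, μ (rT h X) = c * μ X := by
  have hmeas : Measurable (fun x : G => x * h⁻¹) := measurable_mul_const h⁻¹
  set ν : Measure G := μ.map (fun x => x * h⁻¹) with hν
  have hemb : MeasurableEmbedding (fun x : G => x * h⁻¹) :=
    (Homeomorph.mulRight h⁻¹).measurableEmbedding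
  have h1 : ν.IsMulLeftInvariant := by
    refine ⟨fun g => ?_⟩
    rw [hν, Measure.map_map (measurable_const_mul g) hmeas]
    have : ((fun x : G => g * x) ∘ fun x => x * h⁻¹) = (fun x => x * h⁻¹) ∘ (fun x => g * x) := by
      funext x; simp [Function.comp, mul_assoc]
    rw [this, ← Measure.map_map hmeas (measurable_const_mul g),
      map_mul_left_eq_self μ g]
  have h2 : IsFiniteMeasureOnCompacts ν := by
    refine ⟨fun K hK => ?_⟩
    rw [hemb.map_apply μ]
    exact IsCompact.measure_lt_top ((Homeomorph.mulRight h⁻¹).isCompact_preimage.mpr hK)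
  obtain ⟨c, key⟩ : ∃ c : ℝ≥0, ν = c • μ := ⟨_, Measure.isMulLeftInvariant_eq_smul ν μ⟩
  refine ⟨c, fun X => ?_⟩
  have h4 : μ (rT h X) = ν X := (hemb.map_apply μ X).symm
  rw [h4, key]
  simp

end TilingMautner

open TilingMautner
open scoped symmDiff Pointwise NNReal ENNReal

/-- **Mautner phenomenon** in the tiling setup: if `a ∈ S = {g : P = Pg mod 0}` and
`aⁿ g a⁻ⁿ → e` as `n → ∞`, then `g ∈ S`. -/
theorem tiling_mautner
    {E : Type*} [NormedAddCommGroup E] [NormedSpace ℝ E] [FiniteDimensional ℝ E]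
    {G : Type*} [TopologicalSpace G] [ChartedSpace E G] [Group G] [IsTopologicalGroup G]
    [LieGroup 𝓘(ℝ, E) (⊤ : ℕ∞) G] [ConnectedSpace G]
    [Finite (Subgroup.center G)]
    [LieAlgebra.IsSimple ℝ (LeftInvariantDerivation 𝓘(ℝ, E) G)]
    [MeasurableSpace G] [BorelSpace G] [LocallyCompactSpace G]
    (μ : Measure G) [μ.IsHaarMeasure]
    (Γ : Subgroup G) (hΓdisc : DiscreteTopology ↥Γ)
    (D : Set G) (hD : IsFundamentalDomain ↥Γ D μ) (hDfin : μ D < ⊤)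
    (P : Set G) (hP : MeasurableSet P)
    (htile : ∀ γ₁ ∈ Γ, ∀ γ₂ ∈ Γ,
      μ (symmDiff ((fun g => γ₁ * g) '' P) ((fun g => γ₂ * g) '' P)) = 0 ∨
      μ (((fun g => γ₁ * g) '' P) ∩ ((fun g => γ₂ * g) '' P)) = 0)
    (hcover : μ (⋃ γ ∈ Γ, (fun g => γ * g) '' P)ᶜ = 0)
    (a g : G)
    (ha : μ (symmDiff P (rightTransl P a)) = 0)
    (hconv : Tendsto (fun n : ℕ => a ^ n * g * (a ^ n)⁻¹) atTop (𝓝 (1 : G))) :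
    μ (symmDiff P (rightTransl P g)) = 0 := by
  classical
  -- topological instances
  haveI : T2Space G := t2space_of_chartedSpace (E := E)
  haveI : SigmaCompactSpace G := sigmaCompact_of_connected
  haveI : SecondCountableTopology G := ChartedSpace.secondCountable_of_sigmaCompact E G
  haveI hcntΓ : Countable ↥Γ := TopologicalSpace.separableSpace_iff_countable.mp inferInstance
  -- regularity of μ
  obtain ⟨K₀, hK₀, hK₀1⟩ := exists_compact_mem_nhds (1 : G)
  haveI : μ.Regular := MeasureTheory.Measure.regular_of_isMulLeftInvariant hK₀
    ⟨1, mem_interior_iff_mem_nhds.mpr hK₀1⟩ hK₀.measure_lt_top.ne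
  -- right translations quasi-preserve the measure
  have hrfac : ∀ h : G, ∃ c : ℝ≥0, ∀ X : Set G, μ (rT h X) = c * μ X :=
    fun h => exists_rT_factor μ h
  have hrt : ∀ (u : G) (X : Set G), μ X = 0 → μ (rT u X) = 0 := by
    intro u X hX
    obtain ⟨c, hc⟩ := hrfac u
    rw [hc, hX, mul_zero]
  -- tiling families for Γ
  have hUinv : ∀ (H : Subgroup G) (f : G → Set G),
      (⋃ δ : ↥H, f ((δ : G)⁻¹)) = ⋃ δ : ↥H, f (δ : G) := by
    intro H f
    ext x
    constructor
    · rintro ⟨s, ⟨δ, rfl⟩, hs⟩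
      exact Set.mem_iUnion.2 ⟨δ⁻¹, by simpa using hs⟩
    · rintro ⟨s, ⟨δ, rfl⟩, hs⟩
      exact Set.mem_iUnion.2 ⟨δ⁻¹, by simpa using hs⟩
  have hPinv : ∀ {H : Subgroup G} {f : G → Set G},
      Pairwise (Function.onFun (AEDisjoint μ) (fun δ : ↥H => f (δ : G))) →
      Pairwise (Function.onFun (AEDisjoint μ) (fun δ : ↥H => f ((δ : G)⁻¹))) := by
    intro H f hp i j hij
    have hne : (i⁻¹ : ↥H) ≠ j⁻¹ := fun h => hij (by simpa using congrArg (·⁻¹) h)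
    have := hp hne
    simpa [Function.onFun] using this
  have covΓinv : μ (⋃ γ : ↥Γ, lT ((γ : G))⁻¹ D)ᶜ = 0 := by
    have h := hD.ae_covers
    rw [Filter.eventually_iff, mem_ae_iff] at h
    refine measure_mono_null ?_ h
    intro x hx
    simp only [Set.mem_compl_iff, Set.mem_iUnion, not_exists, Set.mem_setOf_eq] at hx ⊢
    intro γ hγ
    refine hx γ ?_
    simpa [lT, Subgroup.smul_def] using hγ
  have hγD : ∀ γ : ↥Γ, (γ • D : Set G) = lT (γ : G) D := by
    intro γ
    ext x
    rw [Set.mem_smul_set_iff_inv_smul_mem]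
    simp [lT, Subgroup.smul_def]
  have disΓfwd : Pairwise (Function.onFun (AEDisjoint μ) (fun γ : ↥Γ => lT (γ : G) D)) := by
    intro i j hij
    have := hD.aedisjoint hij
    rwa [Function.onFun, hγD i, hγD j] at this
  have covΓfwd : μ (⋃ γ : ↥Γ, lT (γ : G) D)ᶜ = 0 := by
    rw [← hUinv Γ (fun u => lT u D)]
    exact covΓinv
  -- positivity of μ D
  have hμD_pos : μ D ≠ 0 := by
    intro h0
    have hall : μ (⋃ γ : ↥Γ, lT ((γ : G))⁻¹ D) = 0 :=
      measure_iUnion_null fun γ => by rw [meas_lT]; exact h0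
    have huniv : μ (Set.univ : Set G) = 0 := by
      have h1 := measure_union_le (μ := μ) (⋃ γ : ↥Γ, lT ((γ : G))⁻¹ D)
        (⋃ γ : ↥Γ, lT ((γ : G))⁻¹ D)ᶜ
      rw [Set.union_compl_self, hall, covΓinv, add_zero] at h1
      exact le_antisymm h1 zero_le
    exact IsOpen.measure_ne_zero μ isOpen_univ ⟨1, trivial⟩ huniv
  -- unimodularity: μ is right invariant
  have hRinv : ∀ (u : G) (X : Set G), μ (rT u X) = μ X := by
    intro u X
    obtain ⟨c, hc⟩ := hrfac u
    have hDnm := hD.nullMeasurableSet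
    have htrans : μ (D ∩ Set.univ) = μ (rT u D ∩ Set.univ) := by
      refine transfer μ (fun γ : ↥Γ => (γ : G)) D (rT u D) Set.univ hDnm
        (rT_nm hrt u hDnm)
        (fun γ => by rw [lT_rT]; exact rT_nm hrt u (lT_nm μ _ hDnm))
        (fun γ => lT_nm μ _ hDnm)
        MeasurableSet.univ.nullMeasurableSet ?_ ?_ covΓinv (hPinv (f := fun u => lT u D) disΓfwd) ?_
      · have h1 : (⋃ γ : ↥Γ, lT (γ : G) (rT u D)) = rT u (⋃ γ : ↥Γ, lT (γ : G) D) :=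
          (Set.iUnion_congr fun γ => lT_rT _ _ _).trans (rT_iUnion u _).symm
        rw [h1, ← rT_compl]
        exact hrt u _ covΓfwd
      · intro i j hij
        have h0 : μ (lT (i : G) D ∩ lT (j : G) D) = 0 := disΓfwd hij
        have h1 : μ (rT u (lT (i : G) D) ∩ rT u (lT (j : G) D)) = 0 := by
          rw [← rT_inter]
          exact hrt u _ h0
        show μ ((lT (i : G) (rT u D)) ∩ (lT (j : G) (rT u D))) = 0
        rw [lT_rT, lT_rT]
        exact h1
      · intro γ
        rw [show lT ((γ : G))⁻¹ (Set.univ : Set G) = Set.univ from Set.preimage_univ]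
        exact EventuallyEq.rfl
    rw [Set.inter_univ, Set.inter_univ] at htrans
    have hc1 : (c : ℝ≥0∞) = 1 := by
      have h2 : (c : ℝ≥0∞) * μ D = 1 * μ D := by
        rw [one_mul, ← hc D, ← htrans]
      exact (ENNReal.mul_left_inj hμD_pos hDfin.ne).mp h2
    rw [hc X, hc1, one_mul]
  haveI hRinst : μ.IsMulRightInvariant := by
    refine ⟨fun u => MeasureTheory.Measure.ext fun s hs => ?_⟩
    rw [MeasureTheory.Measure.map_apply (measurable_mul_const u) hs]
    have h1 : (fun x => x * u) ⁻¹' s = rT u⁻¹ s := by simp [rT]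
    rw [h1, hRinv]
  -- basic translates of P
  have hPim : ∀ r : G, (fun x => r * x) '' P = lT r P := fun r => (lT_image r P).symm
  have ha' : P =ᵐ[μ] rT a P := by
    rw [← measure_symmDiff_eq_zero_iff]
    have : rightTransl P a = rT a P := (rT_image a P).symm
    rwa [this] at ha
  have haPn : ∀ n : ℕ, P =ᵐ[μ] rT (a ^ n) P := by
    intro n
    induction n with
    | zero => rw [pow_zero, rT_one]; exact EventuallyEq.rfl
    | succ n ih =>
        have h1 : rT (a ^ (n + 1)) P = rT a (rT (a ^ n) P) := by
          rw [rT_rT, ← pow_succ]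
        rw [h1]
        exact ha'.trans (rT_ae hrt a ih)
  have haPninv : ∀ n : ℕ, P =ᵐ[μ] rT ((a ^ n)⁻¹) P := by
    intro n
    have h1 := rT_ae hrt ((a ^ n)⁻¹) (haPn n)
    rw [rT_rT, mul_inv_cancel, rT_one] at h1
    exact h1.symm
  -- the subgroup Γ₀ of a.e.-stabilizers inside Γ
  set Γ₀ : Subgroup G :=
    { carrier := {x : G | x ∈ Γ ∧ lT x P =ᵐ[μ] P}
      one_mem' := ⟨Γ.one_mem, by rw [lT_one]; exact EventuallyEq.rfl⟩
      mul_mem' := by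
        rintro x y ⟨hxΓ, hx⟩ ⟨hyΓ, hy⟩
        refine ⟨Γ.mul_mem hxΓ hyΓ, ?_⟩
        rw [← lT_lT]
        exact (lT_ae μ x hy).trans hx
      inv_mem' := by
        rintro x ⟨hxΓ, hx⟩
        refine ⟨Γ.inv_mem hxΓ, ?_⟩
        have h1 := lT_ae μ x⁻¹ hx
        rw [lT_lT, inv_mul_cancel, lT_one] at h1
        exact h1.symm } with hΓ₀def
  have hmemΓ₀ : ∀ x : G, x ∈ Γ₀ ↔ (x ∈ Γ ∧ lT x P =ᵐ[μ] P) := fun x => Iff.rfl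
  haveI hcntΓ₀ : Countable ↥Γ₀ := by
    have h1 : (Γ : Set G).Countable := Set.countable_coe_iff.mpr hcntΓ
    have h2 : ((Γ₀ : Subgroup G) : Set G).Countable :=
      h1.mono (fun x hx => ((hmemΓ₀ x).mp hx).1)
    exact h2.to_subtype
  -- quotient and representatives
  set Qt := ↥Γ ⧸ Γ₀.subgroupOf Γ with hQt
  haveI : Countable Qt := Quotient.countable
  set rc : Qt → G := fun q => ((Quotient.out q : ↥Γ) : G) with hrc
  have hrcΓ : ∀ q, rc q ∈ Γ := fun q => (Quotient.out q).2
  have hqeq : ∀ q₁ q₂ : Qt, (rc q₂)⁻¹ * rc q₁ ∈ Γ₀ → q₁ = q₂ := by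
    intro q₁ q₂ hmem
    have h1 : (Quotient.out q₂)⁻¹ * Quotient.out q₁ ∈ Γ₀.subgroupOf Γ := by
      rw [Subgroup.mem_subgroupOf]
      simpa [rc] using hmem
    have h2 := QuotientGroup.eq.mpr h1
    rw [QuotientGroup.out_eq', QuotientGroup.out_eq'] at h2
    exact h2.symm
  have hsur : ∀ γ : ↥Γ, ∃ (δ : ↥Γ₀) (q : Qt), (δ : G) * (rc q)⁻¹ = (γ : G) := by
    intro γ
    set q : Qt := QuotientGroup.mk γ⁻¹ with hq
    have h1 : (γ⁻¹ : ↥Γ)⁻¹ * (Quotient.out q) ∈ Γ₀.subgroupOf Γ := by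
      rw [← QuotientGroup.eq, hq, QuotientGroup.out_eq']
    have h2 : ((γ * Quotient.out q : ↥Γ) : G) ∈ Γ₀ := by
      have h3 := Subgroup.mem_subgroupOf.mp h1
      simpa using h3
    refine ⟨⟨_, h2⟩, q, ?_⟩
    show ((γ : G) * ((Quotient.out q : ↥Γ) : G)) * (rc q)⁻¹ = (γ : G)
    rw [hrc, mul_inv_cancel_right]
  -- the fundamental domain for Γ₀
  set D₀ : Set G := ⋃ q : Qt, lT (rc q)⁻¹ D with hD₀def
  have nmD₀ : NullMeasurableSet D₀ μ :=
    NullMeasurableSet.iUnion fun q => lT_nm μ _ hD.nullMeasurableSet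
  have covD₀fwd : μ (⋃ δ : ↥Γ₀, lT (δ : G) D₀)ᶜ = 0 := by
    refine measure_mono_null (Set.compl_subset_compl.mpr ?_) covΓfwd
    rintro x ⟨s, ⟨γ, rfl⟩, hs⟩
    obtain ⟨δ, q, hδ⟩ := hsur γ
    refine Set.mem_iUnion.2 ⟨δ, ?_⟩
    have h1 : lT ((δ : G)) (lT (rc q)⁻¹ D) = lT (γ : G) D := by rw [lT_lT, hδ]
    have hx' : x ∈ lT (δ : G) (lT (rc q)⁻¹ D) := h1 ▸ hs
    exact lT_mono _ (Set.subset_iUnion (fun q => lT (rc q)⁻¹ D) q) hx'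
  have disD₀fwd : Pairwise (Function.onFun (AEDisjoint μ) (fun δ : ↥Γ₀ => lT (δ : G) D₀)) := by
    intro δ₁ δ₂ hne
    show μ (lT (δ₁ : G) D₀ ∩ lT (δ₂ : G) D₀) = 0
    have hsubset : lT (δ₁ : G) D₀ ∩ lT (δ₂ : G) D₀ ⊆
        ⋃ (q₁ : Qt) (q₂ : Qt),
          (lT ((δ₁ : G) * (rc q₁)⁻¹) D ∩ lT ((δ₂ : G) * (rc q₂)⁻¹) D) := by
      rintro x ⟨hx₁, hx₂⟩
      rw [hD₀def, lT_iUnion] at hx₁ hx₂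
      obtain ⟨s, ⟨q₁, rfl⟩, hq₁⟩ := hx₁
      obtain ⟨s, ⟨q₂, rfl⟩, hq₂⟩ := hx₂
      simp only [lT_lT] at hq₁ hq₂
      exact Set.mem_iUnion.2 ⟨q₁, Set.mem_iUnion.2 ⟨q₂, hq₁, hq₂⟩⟩
    refine measure_mono_null hsubset
      (measure_iUnion_null fun q₁ => measure_iUnion_null fun q₂ => ?_)
    by_cases heq : (δ₁ : G) * (rc q₁)⁻¹ = (δ₂ : G) * (rc q₂)⁻¹
    · exfalso
      have h' : (δ₂ : G)⁻¹ * (δ₁ : G) = (rc q₂)⁻¹ * rc q₁ := by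
        calc (δ₂ : G)⁻¹ * (δ₁ : G)
            = (δ₂ : G)⁻¹ * ((δ₁ : G) * (rc q₁)⁻¹) * rc q₁ := by group
          _ = (δ₂ : G)⁻¹ * ((δ₂ : G) * (rc q₂)⁻¹) * rc q₁ := by rw [heq]
          _ = (rc q₂)⁻¹ * rc q₁ := by group
      have hmem : (rc q₂)⁻¹ * rc q₁ ∈ Γ₀ := by
        rw [← h']
        exact Γ₀.mul_mem (Γ₀.inv_mem δ₂.2) δ₁.2
      have hq12 : q₁ = q₂ := hqeq q₁ q₂ hmem
      subst hq12
      have : (δ₁ : G) = (δ₂ : G) := by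
        have := mul_right_cancel heq
        exact this
      exact hne (Subtype.coe_injective this)
    · have hm₁ : (δ₁ : G) * (rc q₁)⁻¹ ∈ Γ :=
        Γ.mul_mem ((hmemΓ₀ _).mp δ₁.2).1 (Γ.inv_mem (hrcΓ q₁))
      have hm₂ : (δ₂ : G) * (rc q₂)⁻¹ ∈ Γ :=
        Γ.mul_mem ((hmemΓ₀ _).mp δ₂.2).1 (Γ.inv_mem (hrcΓ q₂))
      have hneu : (⟨_, hm₁⟩ : ↥Γ) ≠ ⟨_, hm₂⟩ := fun h => heq (congrArg Subtype.val h)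
      exact disΓfwd hneu
  have covD₀inv : μ (⋃ δ : ↥Γ₀, lT ((δ : G))⁻¹ D₀)ᶜ = 0 := by
    rw [hUinv Γ₀ (fun u => lT u D₀)]
    exact covD₀fwd
  have disD₀inv : Pairwise (Function.onFun (AEDisjoint μ) (fun δ : ↥Γ₀ => lT ((δ : G))⁻¹ D₀)) :=
    hPinv (f := fun u => lT u D₀) disD₀fwd
  -- finiteness of the core
  have hQle : μ (D₀ ∩ P) ≤ μ D := by
    have h1 : D₀ ∩ P = ⋃ q : Qt, (lT (rc q)⁻¹ D ∩ P) := by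
      rw [hD₀def, Set.iUnion_inter]
    rw [h1]
    refine le_trans (measure_iUnion_le _) ?_
    have h2 : ∀ q : Qt, μ (lT (rc q)⁻¹ D ∩ P) = μ (D ∩ lT (rc q) P) := by
      intro q
      have h3 : μ (lT (rc q)⁻¹ D ∩ P) = μ (lT (rc q) (lT (rc q)⁻¹ D ∩ P)) :=
        (meas_lT μ (rc q) _).symm
      rw [h3, lT_inter, lT_lT, mul_inv_cancel, lT_one]
    rw [tsum_congr h2]
    have h3 : Pairwise (Function.onFun (AEDisjoint μ) fun q : Qt => D ∩ lT (rc q) P) := by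
      intro q₁ q₂ hqne
      have hPdis : AEDisjoint μ (lT (rc q₁) P) (lT (rc q₂) P) := by
        rcases htile (rc q₁) (hrcΓ q₁) (rc q₂) (hrcΓ q₂) with hcase | hcase
        · exfalso
          have h4 : lT (rc q₁) P =ᵐ[μ] lT (rc q₂) P := by
            rw [← measure_symmDiff_eq_zero_iff]
            rwa [hPim, hPim] at hcase
          have h5 := lT_ae μ (rc q₂)⁻¹ h4
          rw [lT_lT, lT_lT, inv_mul_cancel, lT_one] at h5
          have hmem : (rc q₂)⁻¹ * rc q₁ ∈ Γ₀ :=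
            (hmemΓ₀ _).mpr ⟨Γ.mul_mem (Γ.inv_mem (hrcΓ q₂)) (hrcΓ q₁), h5⟩
          exact hqne (hqeq _ _ hmem)
        · rwa [hPim, hPim] at hcase
      exact hPdis.mono Set.inter_subset_right Set.inter_subset_right
    have h5 : ∀ q : Qt, NullMeasurableSet (D ∩ lT (rc q) P) μ := fun q =>
      hD.nullMeasurableSet.inter
        ((hP.preimage (measurable_const_mul _)).nullMeasurableSet)
    rw [← measure_iUnion₀ h3 h5]
    exact measure_mono (Set.iUnion_subset fun q => Set.inter_subset_left)
  -- invariance helpers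
  have hsymm_inv : ∀ (u δ : G), lT δ P =ᵐ[μ] P → lT δ (P ∆ rT u P) =ᵐ[μ] (P ∆ rT u P) := by
    intro u δ hδ
    rw [lT_symmDiff, lT_rT]
    exact hδ.symmDiff (rT_ae hrt u hδ)
  have hdiff_inv : ∀ (u δ : G), lT δ P =ᵐ[μ] P → lT δ (rT u P \ P) =ᵐ[μ] (rT u P \ P) := by
    intro u δ hδ
    rw [lT_diff, lT_rT]
    exact (rT_ae hrt u hδ).diff hδ
  have hδP : ∀ δ : ↥Γ₀, lT ((δ : G))⁻¹ P =ᵐ[μ] P :=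
    fun δ => ((hmemΓ₀ _).mp (Γ₀.inv_mem δ.2)).2
  -- transfer applications
  have htransfer : ∀ (v : G) (Y : Set G), MeasurableSet Y →
      (∀ δ : ↥Γ₀, lT ((δ : G))⁻¹ Y =ᵐ[μ] Y) → μ (D₀ ∩ Y) = μ (rT v D₀ ∩ Y) := by
    intro v Y hYm hYinv
    refine transfer μ (fun δ : ↥Γ₀ => (δ : G)) D₀ (rT v D₀) Y nmD₀ (rT_nm hrt v nmD₀)
      (fun δ => by rw [lT_rT]; exact rT_nm hrt v (lT_nm μ _ nmD₀))
      (fun δ => lT_nm μ _ nmD₀) hYm.nullMeasurableSet ?_ ?_ covD₀inv disD₀inv hYinv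
    · have h1 : (⋃ δ : ↥Γ₀, lT (δ : G) (rT v D₀)) = rT v (⋃ δ : ↥Γ₀, lT (δ : G) D₀) :=
        (Set.iUnion_congr fun δ => lT_rT _ _ _).trans (rT_iUnion v _).symm
      rw [h1, ← rT_compl]
      exact hrt v _ covD₀fwd
    · intro i j hij
      have h0 : μ (lT (i : G) D₀ ∩ lT (j : G) D₀) = 0 := disD₀fwd hij
      have h1 : μ (rT v (lT (i : G) D₀) ∩ rT v (lT (j : G) D₀)) = 0 := by
        rw [← rT_inter]
        exact hrt v _ h0
      show μ ((lT (i : G) (rT v D₀)) ∩ (lT (j : G) (rT v D₀))) = 0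
      rw [lT_rT, lT_rT]
      exact h1
  -- the measurable core of finite measure
  have nmQ : NullMeasurableSet (D₀ ∩ P) μ := nmD₀.inter hP.nullMeasurableSet
  set Qm := toMeasurable μ (D₀ ∩ P) with hQmdef
  have hQmm : MeasurableSet Qm := measurableSet_toMeasurable μ _
  have hQmeq : Qm =ᵐ[μ] ((D₀ ∩ P : Set G)) := nmQ.toMeasurable_ae_eq
  have hQmfin : μ Qm ≠ ⊤ := by
    rw [hQmdef, measure_toMeasurable]
    exact (lt_of_le_of_lt hQle hDfin).ne
  -- the main set
  set X : Set G := P ∆ rT g P with hXdef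
  have hXinv : ∀ δ : ↥Γ₀, lT ((δ : G))⁻¹ X =ᵐ[μ] X := fun δ => hsymm_inv g _ (hδP δ)
  -- the sequence of conjugates
  set c : ℕ → G := fun n => a ^ n * g * (a ^ n)⁻¹ with hcdef
  -- the per-n bound
  have hYnm : ∀ u : G, MeasurableSet (P ∆ rT u P) :=
    fun u => hP.symmDiff (hP.preimage (measurable_mul_const u⁻¹))
  have hbound : ∀ n : ℕ, μ (D₀ ∩ X) ≤ μ (Qm ∆ rT (c n) Qm) + μ (Qm ∆ rT (c n) Qm) := by
    intro n
    set b : G := a ^ n with hbdef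
    set Yn : Set G := P ∆ rT (c n) P with hYndef
    -- decomposition of X
    have hgrp : rT g P = rT b (rT (c n) (rT b⁻¹ P)) := by
      rw [rT_rT, rT_rT]
      congr 1
      rw [hcdef, hbdef]
      group
    have hnull1 : μ (P ∆ rT b P) = 0 := measure_symmDiff_eq_zero_iff.mpr (haPn n)
    have hnull2 : μ (rT b (rT (c n) (P ∆ rT b⁻¹ P))) = 0 :=
      hrt _ _ (hrt _ _ (measure_symmDiff_eq_zero_iff.mpr (haPninv n)))
    -- inclusion
    have hsub1 : X ⊆ (P ∆ rT b P) ∪ (rT b Yn ∪ rT b (rT (c n) (P ∆ rT b⁻¹ P))) := by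
      intro x hx
      rw [hXdef, hgrp] at hx
      have t1 : P ∆ rT b (rT (c n) (rT b⁻¹ P)) ⊆
          (P ∆ rT b P) ∪ (rT b P ∆ rT b (rT (c n) (rT b⁻¹ P))) :=
        symmDiff_triangle P (rT b P) _
      rcases t1 hx with h | h
      · exact Or.inl h
      · right
        have e1 : rT b P ∆ rT b (rT (c n) (rT b⁻¹ P)) = rT b (P ∆ rT (c n) (rT b⁻¹ P)) :=
          (rT_symmDiff _ _ _).symm
        rw [e1] at h
        have t2 : P ∆ rT (c n) (rT b⁻¹ P) ⊆
            (P ∆ rT (c n) P) ∪ (rT (c n) P ∆ rT (c n) (rT b⁻¹ P)) :=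
          symmDiff_triangle P (rT (c n) P) _
        have e2 : rT (c n) P ∆ rT (c n) (rT b⁻¹ P) = rT (c n) (P ∆ rT b⁻¹ P) :=
          (rT_symmDiff _ _ _).symm
        have h2 := rT_mono b (t2.trans (by rw [e2]))
        rw [rT_union] at h2
        exact h2 h
    -- step 1: kill null parts
    have hstep1 : μ (D₀ ∩ X) ≤ μ (D₀ ∩ rT b Yn) := by
      have hs : D₀ ∩ X ⊆ (D₀ ∩ rT b Yn) ∪
          ((P ∆ rT b P) ∪ rT b (rT (c n) (P ∆ rT b⁻¹ P))) := by
        rintro x ⟨hxD, hxX⟩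
        rcases hsub1 hxX with h | h
        · exact Or.inr (Or.inl h)
        · rcases h with h | h
          · exact Or.inl ⟨hxD, h⟩
          · exact Or.inr (Or.inr h)
      refine le_trans (measure_mono hs) ?_
      refine le_trans (measure_union_le _ _) ?_
      rw [measure_union_null hnull1 hnull2, add_zero]
    -- step 2: transfer along b
    have hYninv : ∀ δ : ↥Γ₀, lT ((δ : G))⁻¹ (rT b Yn) =ᵐ[μ] rT b Yn := by
      intro δ
      rw [lT_rT]
      exact rT_ae hrt b (hsymm_inv (c n) _ (hδP δ))
    have hstep2 : μ (D₀ ∩ rT b Yn) = μ (rT b D₀ ∩ rT b Yn) :=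
      htransfer b (rT b Yn) ((hYnm (c n)).preimage (measurable_mul_const b⁻¹)) hYninv
    have hstep3 : μ (rT b D₀ ∩ rT b Yn) = μ (D₀ ∩ Yn) := by
      rw [← rT_inter, hRinv]
    -- step 3: split the symmetric difference
    have hsplit : D₀ ∩ Yn = (D₀ ∩ (P \ rT (c n) P)) ∪ (D₀ ∩ (rT (c n) P \ P)) := by
      rw [hYndef, Set.symmDiff_def, Set.inter_union_distrib_left]
    have hi1 : μ (D₀ ∩ (P \ rT (c n) P)) ≤ μ ((D₀ ∩ P) \ rT (c n) (D₀ ∩ P)) := by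
      refine measure_mono ?_
      rintro x ⟨hxD, hxP, hxn⟩
      exact ⟨⟨hxD, hxP⟩, fun hc' => hxn (rT_mono (c n) Set.inter_subset_right hc')⟩
    have hi2 : μ (D₀ ∩ (rT (c n) P \ P)) = μ (rT (c n) D₀ ∩ (rT (c n) P \ P)) :=
      htransfer (c n) _
        (((hP.preimage (measurable_mul_const (c n)⁻¹))).diff hP)
        (fun δ => hdiff_inv (c n) _ (hδP δ))
    have hi3 : μ (rT (c n) D₀ ∩ (rT (c n) P \ P)) ≤ μ (rT (c n) (D₀ ∩ P) \ (D₀ ∩ P)) := by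
      refine measure_mono ?_
      rintro x ⟨hxD, hxP, hxn⟩
      refine ⟨?_, fun hc' => hxn hc'.2⟩
      rw [rT_inter]
      exact ⟨hxD, hxP⟩
    -- replace D₀ ∩ P by Qm
    have hrepl1 : μ ((D₀ ∩ P) \ rT (c n) (D₀ ∩ P)) = μ (Qm \ rT (c n) Qm) :=
      measure_congr ((hQmeq.symm).diff (rT_ae hrt (c n) hQmeq.symm))
    have hrepl2 : μ (rT (c n) (D₀ ∩ P) \ (D₀ ∩ P)) = μ (rT (c n) Qm \ Qm) :=
      measure_congr ((rT_ae hrt (c n) hQmeq.symm).diff hQmeq.symm)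
    have hd1 : μ (Qm \ rT (c n) Qm) ≤ μ (Qm ∆ rT (c n) Qm) := by
      refine measure_mono ?_
      rw [Set.symmDiff_def]
      exact Set.subset_union_left
    have hd2 : μ (rT (c n) Qm \ Qm) ≤ μ (Qm ∆ rT (c n) Qm) := by
      refine measure_mono ?_
      rw [Set.symmDiff_def]
      exact Set.subset_union_right
    calc μ (D₀ ∩ X) ≤ μ (D₀ ∩ rT b Yn) := hstep1
      _ = μ (D₀ ∩ Yn) := by rw [hstep2, hstep3]
      _ ≤ μ (D₀ ∩ (P \ rT (c n) P)) + μ (D₀ ∩ (rT (c n) P \ P)) := by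
          rw [hsplit]; exact measure_union_le _ _
      _ ≤ μ (Qm ∆ rT (c n) Qm) + μ (Qm ∆ rT (c n) Qm) := by
          refine add_le_add (le_trans hi1 ?_) ?_
          · rw [hrepl1]; exact hd1
          · rw [hi2]
            refine le_trans hi3 ?_
            rw [hrepl2]; exact hd2
  -- convergence of the bound to zero
  set Φ : C(G × G, G) := ⟨fun p => p.2 * p.1⁻¹, by fun_prop⟩ with hΦdef
  have hf : Tendsto (fun n => Φ.curry (c n)) atTop (𝓝 (Φ.curry 1)) :=
    (Φ.curry.continuous.tendsto 1).comp hconv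
  have hmp : ∀ h : G, MeasurePreserving (fun x : G => x * h⁻¹) μ μ :=
    fun h => measurePreserving_mul_right μ h⁻¹
  have hcv := MeasureTheory.tendsto_measure_symmDiff_preimage_nhds_zero (μ := μ) (ν := μ)
    hf (Filter.Eventually.of_forall fun n => hmp (c n)) (hmp 1)
    hQmm.nullMeasurableSet hQmfin
  have hcv' : Tendsto (fun n => μ (Qm ∆ rT (c n) Qm)) atTop (𝓝 0) := by
    have hform : ∀ n, μ ((⇑(Φ.curry (c n)) ⁻¹' Qm) ∆ (⇑(Φ.curry 1) ⁻¹' Qm))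
        = μ (Qm ∆ rT (c n) Qm) := by
      intro n
      have h1 : (⇑(Φ.curry (1 : G)) ⁻¹' Qm) = Qm := by
        ext x; simp [hΦdef, ContinuousMap.curry]
      have h2 : (⇑(Φ.curry (c n)) ⁻¹' Qm) = rT (c n) Qm := by
        ext x; simp [hΦdef, ContinuousMap.curry, rT]
      rw [h1, h2, symmDiff_comm]
    simpa only [hform] using hcv
  have hzero : μ (D₀ ∩ X) = 0 := by
    have hsum : Tendsto (fun n => μ (Qm ∆ rT (c n) Qm) + μ (Qm ∆ rT (c n) Qm)) atTop (𝓝 0) := by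
      simpa using hcv'.add hcv'
    have hle : μ (D₀ ∩ X) ≤ 0 := ge_of_tendsto hsum (Filter.Eventually.of_forall hbound)
    exact le_antisymm hle zero_le
  -- detection
  have hfinal : μ X = 0 :=
    detect μ (fun δ : ↥Γ₀ => (δ : G)) X D₀ covD₀fwd hXinv hzero
  have hgoal : rightTransl P g = rT g P := (rT_image g P).symm
  rw [hgoal]
  exact hfinal
end
end

section
/- Let 𝔤 be a simple real Lie algebra and let X ∈ 𝔤 with X ≠ 0 be such that ad X is diagonalizable over ℝ. For λ ∈ ℝ let 𝔤^λ ⊆ 𝔤 denote the eigenspace of ad X for the eigenvalue λ, and set 𝔤⁺ := ⊕_{λ > 0} 𝔤^λ and 𝔤⁻ := ⊕_{λ < 0} 𝔤^λ. Then the Lie subalgebra of 𝔤 generated by 𝔤⁺ ∪ 𝔤⁻ is equal to 𝔤. -/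
open Module LieAlgebra

/-- Bracket of eigenvectors of `ad X` lands in the eigenspace of the sum of eigenvalues. -/
lemma lie_mem_eigenspace_add {L : Type*} [LieRing L] [LieAlgebra ℝ L]
    (X a b : L) (μ ν : ℝ)
    (ha : a ∈ Module.End.eigenspace (LieAlgebra.ad ℝ L X) μ)
    (hb : b ∈ Module.End.eigenspace (LieAlgebra.ad ℝ L X) ν) :
    ⁅a, b⁆ ∈ Module.End.eigenspace (LieAlgebra.ad ℝ L X) (μ + ν) := by
  rw [Module.End.mem_eigenspace_iff] at ha hb ⊢
  rw [LieAlgebra.ad_apply] at ha hb ⊢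
  rw [leibniz_lie X a b, ha, hb, smul_lie, lie_smul, add_smul]

/-- Let `𝔤` be a simple real Lie algebra and `X ≠ 0` an element with `ad X` diagonalizable
over `ℝ`. Then the Lie subalgebra generated by the sum `𝔤⁺` of the eigenspaces of `ad X` for
positive eigenvalues together with the sum `𝔤⁻` of those for negative eigenvalues is all
of `𝔤`. -/
theorem lie_span_pos_neg_eigenspaces_eq_top
    {L : Type*} [LieRing L] [LieAlgebra ℝ L] [FiniteDimensional ℝ L]
    [LieAlgebra.IsSimple ℝ L]
    (X : L) (hX : X ≠ 0)
    (hdiag : ⨆ c : ℝ, Module.End.eigenspace (LieAlgebra.ad ℝ L X) c = ⊤) :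
    LieSubalgebra.lieSpan ℝ L
      ((↑(⨆ c : ℝ, ⨆ _ : 0 < c, Module.End.eigenspace (LieAlgebra.ad ℝ L X) c) : Set L) ∪
       (↑(⨆ c : ℝ, ⨆ _ : c < 0, Module.End.eigenspace (LieAlgebra.ad ℝ L X) c) : Set L)) = ⊤ := by
  set E : ℝ → Submodule ℝ L := fun c => Module.End.eigenspace (LieAlgebra.ad ℝ L X) c with hE
  set P : Submodule ℝ L := ⨆ c : ℝ, ⨆ _ : 0 < c, E c with hP
  set N : Submodule ℝ L := ⨆ c : ℝ, ⨆ _ : c < 0, E c with hN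
  set S : LieSubalgebra ℝ L := LieSubalgebra.lieSpan ℝ L ((P : Set L) ∪ (N : Set L)) with hS
  -- any nonzero eigenspace is contained in S
  have hES : ∀ c : ℝ, c ≠ 0 → ∀ a ∈ E c, a ∈ S := by
    intro c hc a ha
    rcases hc.lt_or_gt with h | h
    · have hle : E c ≤ N := by rw [hN]; exact le_iSup₂ (f := fun c (_ : c < 0) => E c) c h
      exact LieSubalgebra.subset_lieSpan (Set.mem_union_right _ (hle ha))
    · have hle : E c ≤ P := by rw [hP]; exact le_iSup₂ (f := fun c (_ : (0:ℝ) < c) => E c) c h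
      exact LieSubalgebra.subset_lieSpan (Set.mem_union_left _ (hle ha))
  -- key invariance: S is an ideal
  have key : ∀ (x m : L), m ∈ S → ⁅x, m⁆ ∈ S := by
    intro x
    have hx : x ∈ ⨆ c : ℝ, E c := hdiag ▸ Submodule.mem_top
    induction hx using Submodule.iSup_induction' with
    | mem c a ha =>
      rcases eq_or_ne c 0 with rfl | hc
      · -- derivation argument for eigenvalue 0
        intro m hm
        -- the set of y ∈ S with ⁅a, y⁆ ∈ S is a Lie subalgebra containing the generators
        set T : LieSubalgebra ℝ L :=
          { carrier := {y | y ∈ S ∧ ⁅a, y⁆ ∈ S}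
            add_mem' := fun hy hz => ⟨S.add_mem hy.1 hz.1, by rw [lie_add]; exact S.add_mem hy.2 hz.2⟩
            zero_mem' := ⟨S.zero_mem, by rw [lie_zero]; exact S.zero_mem⟩
            smul_mem' := fun t y hy => ⟨S.smul_mem t hy.1, by rw [lie_smul]; exact S.smul_mem t hy.2⟩
            lie_mem' := fun {y z} hy hz => ⟨S.lie_mem hy.1 hz.1, by
              rw [leibniz_lie a y z]
              exact S.add_mem (S.lie_mem hy.2 hz.1) (S.lie_mem hy.1 hz.2)⟩ } with hT
        have hgen : (P : Set L) ∪ (N : Set L) ⊆ T := by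
          have hPT : P ≤ T.toSubmodule := by
            refine iSup_le fun c => iSup_le fun hc => fun z hz => ?_
            have hb := lie_mem_eigenspace_add X a z 0 c ha hz
            rw [zero_add] at hb
            exact ⟨hES c hc.ne' z hz, hES c hc.ne' _ hb⟩
          have hNT : N ≤ T.toSubmodule := by
            refine iSup_le fun c => iSup_le fun hc => fun z hz => ?_
            have hb := lie_mem_eigenspace_add X a z 0 c ha hz
            rw [zero_add] at hb
            exact ⟨hES c hc.ne z hz, hES c hc.ne _ hb⟩
          rintro y (hy | hy)
          · exact hPT hy
          · exact hNT hy
        have hST : S ≤ T := LieSubalgebra.lieSpan_le.mpr hgen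
        exact (hST hm).2
      · intro m hm
        exact S.lie_mem (hES c hc a ha) hm
    | zero => intro m hm; rw [zero_lie]; exact S.zero_mem
    | add y z _ _ hy hz => intro m hm; rw [add_lie]; exact S.add_mem (hy m hm) (hz m hm)
  -- build the ideal
  set I : LieIdeal ℝ L :=
    { S.toSubmodule with
      lie_mem := fun {x m} hm => key x m hm } with hI
  rcases LieAlgebra.IsSimple.eq_bot_or_eq_top I with hbot | htop
  · -- S = ⊥ forces X central, contradiction
    exfalso
    have hE0 : ∀ c : ℝ, c ≠ 0 → E c = ⊥ := by
      intro c hc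
      rw [eq_bot_iff]
      intro a ha
      have : a ∈ I := hES c hc a ha
      rw [hbot] at this
      exact this
    have htop0 : (⊤ : Submodule ℝ L) ≤ E 0 := by
      rw [← hdiag]
      refine iSup_le fun c => ?_
      rcases eq_or_ne c 0 with rfl | hc
      · exact le_rfl
      · rw [hE0 c hc]; exact bot_le
    have hXc : X ∈ LieAlgebra.center ℝ L := by
      intro y
      have : y ∈ E 0 := htop0 Submodule.mem_top
      rw [hE, Module.End.mem_eigenspace_iff, LieAlgebra.ad_apply, zero_smul] at this
      rw [← lie_skew, this, neg_zero]
    rcases LieAlgebra.IsSimple.eq_bot_or_eq_top (LieAlgebra.center ℝ L) with hcb | hct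
    · rw [hcb] at hXc
      exact hX hXc
    · exact LieAlgebra.IsSimple.non_abelian (R := ℝ) (L := L)
        ((LieAlgebra.isLieAbelian_iff_center_eq_top ℝ L).mpr hct)
  · -- S = ⊤
    rw [eq_top_iff]
    intro m _
    have : m ∈ I := htop ▸ LieSubmodule.mem_top m
    exact this
end

section
/- Let n ≥ 1 and let H ⊆ GL_n(ℂ) be a subgroup acting irreducibly on ℂⁿ (the only H-invariant linear subspaces of ℂⁿ are 0 and ℂⁿ) and such that every element of H has all its complex eigenvalues of modulus 1. Then H is relatively compact in GL_n(ℂ) (equivalently, H is bounded along with the inverses of its elements). -/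
open Matrix Polynomial

namespace BenoistAux

variable {n : ℕ}

/-- `A ↦ A *ᵥ v` as a linear map in the matrix `A`. -/
noncomputable def mvr (v : Fin n → ℂ) : Matrix (Fin n) (Fin n) ℂ →ₗ[ℂ] (Fin n → ℂ) where
  toFun A := A.mulVec v
  map_add' A B := Matrix.add_mulVec A B v
  map_smul' c A := Matrix.smul_mulVec c A v

@[simp] lemma mvr_apply (v : Fin n → ℂ) (A : Matrix (Fin n) (Fin n) ℂ) :
    mvr v A = A.mulVec v := rfl

variable (H : Subgroup (GL (Fin n) ℂ))

/-- The linear span of (the image of) `H` inside the matrix algebra. -/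
noncomputable def sp : Submodule ℂ (Matrix (Fin n) (Fin n) ℂ) :=
  Submodule.span ℂ ((fun g : GL (Fin n) ℂ => (g : Matrix (Fin n) (Fin n) ℂ)) '' (H : Set _))

lemma one_mem_sp : (1 : Matrix (Fin n) (Fin n) ℂ) ∈ sp H :=
  Submodule.subset_span ⟨1, H.one_mem, Units.val_one⟩

lemma mul_mem_sp {g : GL (Fin n) ℂ} (hg : g ∈ H) {a : Matrix (Fin n) (Fin n) ℂ}
    (ha : a ∈ sp H) : (g : Matrix (Fin n) (Fin n) ℂ) * a ∈ sp H := by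
  induction ha using Submodule.span_induction with
  | mem x hx =>
    obtain ⟨h, hh, rfl⟩ := hx
    exact Submodule.subset_span ⟨g * h, H.mul_mem hg hh, (Units.val_mul g h)⟩
  | zero => simp
  | add x y _ _ hx hy => simpa [mul_add] using (sp H).add_mem hx hy
  | smul c x _ hx => simpa [mul_smul_comm] using (sp H).smul_mem c hx


section
variable (hirr : ∀ W : Submodule ℂ (Fin n → ℂ),
      (∀ g ∈ H, ∀ v ∈ W, (g : Matrix (Fin n) (Fin n) ℂ).mulVec v ∈ W) → W = ⊥ ∨ W = ⊤)

include hirr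

/-- Schur's lemma: a linear endomorphism commuting with every element of `H` is scalar. -/
lemma schur (hn : 1 ≤ n) (ψ : (Fin n → ℂ) →ₗ[ℂ] (Fin n → ℂ))
    (hcomm : ∀ g ∈ H, ∀ x : Fin n → ℂ,
      ψ ((g : Matrix (Fin n) (Fin n) ℂ).mulVec x) = (g : Matrix (Fin n) (Fin n) ℂ).mulVec (ψ x)) :
    ∃ c : ℂ, ψ = c • LinearMap.id := by
  haveI : Nonempty (Fin n) := Fin.pos_iff_nonempty.mp hn
  obtain ⟨c, hc⟩ := Module.End.exists_eigenvalue (ψ : Module.End ℂ (Fin n → ℂ))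
  refine ⟨c, ?_⟩
  set W : Submodule ℂ (Fin n → ℂ) := LinearMap.ker (ψ - c • LinearMap.id) with hW
  have hWinv : ∀ g ∈ H, ∀ v ∈ W, (g : Matrix (Fin n) (Fin n) ℂ).mulVec v ∈ W := by
    intro g hg v hv
    have hv' : ψ v = c • v := by
      have := (LinearMap.mem_ker).mp hv
      simpa [sub_eq_zero] using this
    refine LinearMap.mem_ker.mpr ?_
    simp [hcomm g hg v, hv', Matrix.mulVec_smul, sub_eq_zero]
  rcases hirr W hWinv with hbot | htop
  · exfalso
    have : Module.End.eigenspace (ψ : Module.End ℂ (Fin n → ℂ)) c ≠ ⊥ := hc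
    apply this
    rw [eq_bot_iff]
    intro x hx
    have hx' : ψ x = c • x := (Module.End.mem_eigenspace_iff).mp hx
    have : x ∈ W := by
      refine LinearMap.mem_ker.mpr ?_
      simp [hx', sub_eq_zero]
    rw [hbot] at this
    exact this
  · refine LinearMap.ext fun x => ?_
    have hxW : x ∈ W := htop ▸ Submodule.mem_top
    have hx : ψ x = c • x := by
      have := (LinearMap.mem_ker).mp hxW
      simpa [sub_eq_zero] using this
    simp [hx]

/-- Jacobson density for the span of `H`. -/
lemma density (hn : 1 ≤ n) :
    ∀ (k : ℕ) (v : Fin k → (Fin n → ℂ)), LinearIndependent ℂ v →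
      ∀ w : Fin k → (Fin n → ℂ), ∃ a ∈ sp H, ∀ i, a.mulVec (v i) = w i := by
  intro k
  induction k with
  | zero => exact fun v _ w => ⟨0, (sp H).zero_mem, fun i => i.elim0⟩
  | succ k ih =>
    intro v hv w
    set v' : Fin k → (Fin n → ℂ) := fun i => v i.castSucc with hv'def
    have hv' : LinearIndependent ℂ v' := hv.comp Fin.castSucc (Fin.castSucc_injective k)
    set N : Submodule ℂ (Matrix (Fin n) (Fin n) ℂ) :=
      sp H ⊓ ⨅ i : Fin k, LinearMap.ker (mvr (v' i)) with hNdef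
    have hNmul : ∀ g ∈ H, ∀ a ∈ N, (g : Matrix (Fin n) (Fin n) ℂ) * a ∈ N := by
      intro g hg a ha
      obtain ⟨haT, haK⟩ := Submodule.mem_inf.mp ha
      refine Submodule.mem_inf.mpr ⟨mul_mem_sp H hg haT, Submodule.mem_iInf _ |>.mpr fun i => ?_⟩
      have h0 : a.mulVec (v' i) = 0 := (Submodule.mem_iInf _).mp haK i
      simp [← Matrix.mulVec_mulVec, h0]
    set Wk : Submodule ℂ (Fin n → ℂ) := N.map (mvr (v (Fin.last k))) with hWkdef
    have hWkinv : ∀ g ∈ H, ∀ x ∈ Wk, (g : Matrix (Fin n) (Fin n) ℂ).mulVec x ∈ Wk := by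
      rintro g hg x ⟨a, haN, rfl⟩
      exact ⟨(g : Matrix (Fin n) (Fin n) ℂ) * a, hNmul g hg a haN,
        by simp [← Matrix.mulVec_mulVec]⟩
    rcases hirr Wk hWkinv with hbot | htop
    · -- contradiction with linear independence
      exfalso
      -- the evaluation maps
      set Φ : (sp H) →ₗ[ℂ] (Fin k → (Fin n → ℂ)) :=
        LinearMap.pi (fun i => (mvr (v' i)).comp (sp H).subtype) with hΦdef
      set Ψ : (sp H) →ₗ[ℂ] (Fin n → ℂ) :=
        (mvr (v (Fin.last k))).comp (sp H).subtype with hΨdef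
      have hΦsurj : Function.Surjective Φ := by
        intro w'
        obtain ⟨a, haT, ha⟩ := ih v' hv' w'
        exact ⟨⟨a, haT⟩, funext fun i => ha i⟩
      have hker : LinearMap.ker Φ ≤ LinearMap.ker Ψ := by
        intro a ha
        have h1 : ∀ i, (a : Matrix (Fin n) (Fin n) ℂ).mulVec (v' i) = 0 := by
          intro i
          exact congrFun (LinearMap.mem_ker.mp ha) i
        have haN : (a : Matrix (Fin n) (Fin n) ℂ) ∈ N :=
          Submodule.mem_inf.mpr ⟨a.2, (Submodule.mem_iInf _).mpr fun i => h1 i⟩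
        have : (a : Matrix (Fin n) (Fin n) ℂ).mulVec (v (Fin.last k)) ∈ Wk := ⟨_, haN, rfl⟩
        rw [hbot] at this
        simpa [hΨdef] using this
      set e := Φ.quotKerEquivOfSurjective hΦsurj with hedef
      set ψ : (Fin k → (Fin n → ℂ)) →ₗ[ℂ] (Fin n → ℂ) :=
        ((LinearMap.ker Φ).liftQ Ψ hker).comp e.symm.toLinearMap with hψdef
      have hfact : ∀ a : (sp H), ψ (Φ a) = Ψ a := by
        intro a
        have he : e (Submodule.Quotient.mk a) = Φ a := by
          simp [hedef, LinearMap.quotKerEquivOfSurjective, LinearMap.quotKerEquivRange_apply_mk]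
        have : e.symm (Φ a) = Submodule.Quotient.mk a := by
          rw [← he, LinearEquiv.symm_apply_apply]
        simp [hψdef, this, Submodule.liftQ_apply]
      -- the component maps commute with H, so they are scalars
      have hscal : ∀ i : Fin k, ∃ c : ℂ,
          (ψ.comp (LinearMap.single ℂ (fun _ : Fin k => Fin n → ℂ) i)) = c • LinearMap.id := by
        intro i
        apply schur H hirr hn
        intro g hg x
        obtain ⟨a, ha⟩ := hΦsurj (Pi.single i x)
        have hga : ((g : Matrix (Fin n) (Fin n) ℂ) * (a : Matrix (Fin n) (Fin n) ℂ)) ∈ sp H :=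
          mul_mem_sp H hg a.2
        have hΦga : Φ ⟨_, hga⟩ = Pi.single i ((g : Matrix (Fin n) (Fin n) ℂ).mulVec x) := by
          funext j
          have : (a : Matrix (Fin n) (Fin n) ℂ).mulVec (v' j)
              = (Pi.single i x : Fin k → Fin n → ℂ) j := congrFun ha j
          simp only [hΦdef, LinearMap.pi_apply, LinearMap.comp_apply, Submodule.coe_subtype,
            mvr_apply, ← Matrix.mulVec_mulVec, this]
          by_cases hji : j = i
          · subst hji; simp
          · simp [Pi.single_eq_of_ne hji]
        calc ψ (LinearMap.single ℂ (fun _ : Fin k => Fin n → ℂ) i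
                ((g : Matrix (Fin n) (Fin n) ℂ).mulVec x))
            = ψ (Φ ⟨_, hga⟩) := by rw [hΦga]; rfl
          _ = Ψ ⟨_, hga⟩ := hfact _
          _ = (g : Matrix (Fin n) (Fin n) ℂ).mulVec (Ψ a) := by
              simp [hΨdef, ← Matrix.mulVec_mulVec]
          _ = (g : Matrix (Fin n) (Fin n) ℂ).mulVec (ψ (Φ a)) := by rw [hfact]
          _ = (g : Matrix (Fin n) (Fin n) ℂ).mulVec
                (ψ (LinearMap.single ℂ (fun _ : Fin k => Fin n → ℂ) i x)) := by rw [ha]; rfl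
      choose cf hcf using hscal
      -- v last is a combination of the others
      have hone : Φ ⟨1, one_mem_sp H⟩ = fun i => v' i := by
        funext i; simp [hΦdef]
      have hlast : v (Fin.last k) = ∑ i : Fin k, cf i • v' i := by
        have h1 : Ψ ⟨1, one_mem_sp H⟩ = v (Fin.last k) := by simp [hΨdef]
        rw [← h1, ← hfact ⟨1, one_mem_sp H⟩, hone]
        have : (fun i => v' i) = ∑ i : Fin k, Pi.single i (v' i) := by
          rw [Finset.univ_sum_single (f := fun i => v' i)]
        rw [this, map_sum]
        refine Finset.sum_congr rfl fun i _ => ?_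
        have := congrFun (congrArg DFunLike.coe (hcf i)) (v' i)
        simpa using this
      -- contradiction
      have := Fintype.linearIndependent_iff.mp hv (Fin.snoc (fun i => cf i) (-1) : Fin (k+1) → ℂ)
      have hzero : ∑ j : Fin (k + 1),
          (Fin.snoc (fun i => cf i) (-1) : Fin (k+1) → ℂ) j • v j = 0 := by
        rw [Fin.sum_univ_castSucc]
        simp only [Fin.snoc_castSucc, Fin.snoc_last, neg_one_smul]
        have hstep : ∑ x : Fin k, cf x • v x.castSucc = v (Fin.last k) := by
          rw [hlast]
        rw [hstep]; abel
      have := this hzero (Fin.last k)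
      simp at this
    · -- transitive case: combine with the induction hypothesis
      obtain ⟨b, hbT, hb⟩ := ih v' hv' (fun i => w i.castSucc)
      have : w (Fin.last k) - b.mulVec (v (Fin.last k)) ∈ Wk := htop ▸ Submodule.mem_top
      obtain ⟨c, hcN, hc⟩ := this
      refine ⟨b + c, (sp H).add_mem hbT (Submodule.mem_inf.mp hcN).1, ?_⟩
      intro i
      refine Fin.lastCases ?_ ?_ i
      · have hc' : c *ᵥ v (Fin.last k) = w (Fin.last k) - b *ᵥ v (Fin.last k) := hc
        rw [Matrix.add_mulVec, hc']
        abel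
      · intro j
        have h1 : b *ᵥ v j.castSucc = w j.castSucc := hb j
        have h2 : c *ᵥ v j.castSucc = 0 :=
          (Submodule.mem_iInf _).mp (Submodule.mem_inf.mp hcN).2 j
        rw [Matrix.add_mulVec, h1, h2, add_zero]

/-- **Burnside**: the span of an irreducible subgroup is the full matrix algebra. -/
lemma sp_eq_top (hn : 1 ≤ n) : sp H = ⊤ := by
  rw [eq_top_iff]
  intro A _
  obtain ⟨a, haT, ha⟩ := density H hirr hn n (fun i => Pi.single i 1)
    (by
      have := (Pi.basisFun ℂ (Fin n)).linearIndependent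
      have heq : ⇑(Pi.basisFun ℂ (Fin n)) = fun i : Fin n => (Pi.single i 1 : Fin n → ℂ) := by
        funext i
        exact Pi.basisFun_apply ℂ (Fin n) i
      rwa [heq] at this)
    (fun i => A.mulVec (Pi.single i 1))
  have : a = A := by
    ext i j
    have := congrFun (ha j) i
    simpa using this
  exact this ▸ haT

end

/-- Roots of the characteristic polynomial lie in the spectrum. -/
lemma root_mem_spectrum (A : Matrix (Fin n) (Fin n) ℂ) (μ : ℂ)
    (h : A.charpoly.IsRoot μ) : μ ∈ spectrum ℂ A := by
  rw [spectrum.mem_iff]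
  intro hunit
  have hdet : (algebraMap ℂ (Matrix (Fin n) (Fin n) ℂ) μ - A).det ≠ 0 := by
    intro h0
    have := (Matrix.isUnit_iff_isUnit_det _).mp hunit
    rw [h0] at this
    exact (by simpa using this : ¬ IsUnit (0 : ℂ)) this |>.elim
  apply hdet
  have : (algebraMap ℂ (Matrix (Fin n) (Fin n) ℂ) μ - A) = (charmatrix A).map (eval μ) := by
    ext i j
    by_cases hij : i = j
    · subst hij
      simp [Matrix.algebraMap_matrix_apply, charmatrix_apply_eq]
    · simp [Matrix.algebraMap_matrix_apply, hij, charmatrix_apply_ne _ _ _ hij]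
  rw [this]
  have h2 : (A.charmatrix.map (eval μ)).det = Polynomial.eval μ A.charpoly := by
    rw [Matrix.charpoly]
    exact (RingHom.map_det (Polynomial.evalRingHom μ) A.charmatrix).symm
  rw [h2]
  exact h

/-- Trace bound from the eigenvalue condition. -/
lemma trace_bound (A : Matrix (Fin n) (Fin n) ℂ)
    (hspec : ∀ c ∈ spectrum ℂ A, ‖c‖ = 1) :
    ‖A.trace‖ ≤ n := by
  rw [Matrix.trace_eq_sum_roots_charpoly]
  have hcard : Multiset.card A.charpoly.roots = n := by
    rw [(Polynomial.splits_iff_card_roots (f := A.charpoly)).mp (IsAlgClosed.splits _)]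
    simp [Matrix.charpoly_natDegree_eq_dim]
  calc ‖A.charpoly.roots.sum‖
      ≤ (A.charpoly.roots.map (fun z : ℂ => ‖z‖)).sum := by
        refine Multiset.le_sum_of_subadditive (fun z : ℂ => ‖z‖) ?_ ?_ _
        · simp
        · exact fun a b => norm_add_le a b
    _ = (A.charpoly.roots.map (fun _ => (1:ℝ))).sum := by
        congr 1
        refine Multiset.map_congr rfl fun r hr => ?_
        exact hspec r (root_mem_spectrum A r (Polynomial.mem_roots'.mp hr).2)
    _ = n := by rw [Multiset.map_const', Multiset.sum_replicate, hcard]; simp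

/-- `A i j` as the trace of `A * stdBasisMatrix j i 1`. -/
lemma entry_eq_trace (A : Matrix (Fin n) (Fin n) ℂ) (i j : Fin n) :
    (A * Matrix.single j i 1).trace = A i j := by
  simp [Matrix.trace, Matrix.diag, Matrix.mul_apply, Matrix.single, ite_and]

/-- Uniform bound on matrix entries of elements of `H`. -/
lemma entry_bound (hn : 1 ≤ n)
    (hirr : ∀ W : Submodule ℂ (Fin n → ℂ),
      (∀ g ∈ H, ∀ v ∈ W, (g : Matrix (Fin n) (Fin n) ℂ).mulVec v ∈ W) → W = ⊥ ∨ W = ⊤)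
    (hell : ∀ g ∈ H, ∀ c ∈ spectrum ℂ (g : Matrix (Fin n) (Fin n) ℂ), ‖c‖ = 1) :
    ∃ C : ℝ, ∀ g ∈ H, ∀ i j : Fin n,
      ‖(g : Matrix (Fin n) (Fin n) ℂ) i j‖ ≤ C := by
  have key : ∀ i j : Fin n, ∃ Cij : ℝ, 0 ≤ Cij ∧ ∀ g ∈ H,
      ‖(g : Matrix (Fin n) (Fin n) ℂ) i j‖ ≤ Cij := by
    intro i j
    have hmem : (Matrix.single j i 1 : Matrix (Fin n) (Fin n) ℂ) ∈ sp H := by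
      rw [sp_eq_top H hirr hn]; trivial
    obtain ⟨m, f, y, hsum⟩ := Submodule.mem_span_set'.mp hmem
    refine ⟨∑ l, ‖f l‖ * n, by positivity, ?_⟩
    intro g hg
    have htr : ∀ l : Fin m, ‖((g : Matrix (Fin n) (Fin n) ℂ) * (y l : Matrix (Fin n) (Fin n) ℂ)).trace‖ ≤ n := by
      intro l
      obtain ⟨u, hu, huy⟩ := (y l).2
      have hgu : g * u ∈ H := H.mul_mem hg hu
      have : ((g : Matrix (Fin n) (Fin n) ℂ) * (y l : Matrix (Fin n) (Fin n) ℂ))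
          = ((g * u : GL (Fin n) ℂ) : Matrix (Fin n) (Fin n) ℂ) := by
        rw [Units.val_mul, ← huy]
      rw [this]
      exact trace_bound _ (hell _ hgu)
    have hentry : ((g : Matrix (Fin n) (Fin n) ℂ) * Matrix.single j i 1).trace
        = (g : Matrix (Fin n) (Fin n) ℂ) i j := entry_eq_trace _ i j
    rw [← hentry, ← hsum, Finset.mul_sum, Matrix.trace_sum]
    calc ‖∑ l, ((g : Matrix (Fin n) (Fin n) ℂ) * (f l • (y l : Matrix (Fin n) (Fin n) ℂ))).trace‖
        ≤ ∑ l, ‖((g : Matrix (Fin n) (Fin n) ℂ) * (f l • (y l : Matrix (Fin n) (Fin n) ℂ))).trace‖ :=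
          norm_sum_le _ _
      _ ≤ ∑ l, ‖f l‖ * n := by
          refine Finset.sum_le_sum fun l _ => ?_
          rw [mul_smul_comm, Matrix.trace_smul, smul_eq_mul, norm_mul]
          exact mul_le_mul_of_nonneg_left (htr l) (norm_nonneg _)
  choose Cf hCf0 hCf using key
  refine ⟨∑ p : Fin n × Fin n, Cf p.1 p.2, fun g hg i j => ?_⟩
  calc ‖(g : Matrix (Fin n) (Fin n) ℂ) i j‖ ≤ Cf i j := hCf i j g hg
    _ ≤ ∑ p : Fin n × Fin n, Cf p.1 p.2 :=
        Finset.single_le_sum (f := fun p : Fin n × Fin n => Cf p.1 p.2)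
          (fun p _ => hCf0 p.1 p.2) (Finset.mem_univ (i, j))

end BenoistAux


open BenoistAux MulOpposite in
/-- **Benoist's lemma.** A subgroup of `GL_n(ℂ)` acting irreducibly on `ℂⁿ`, all of whose
elements have all their complex eigenvalues of modulus `1`, is relatively compact in
`GL_n(ℂ)`. -/
theorem irreducible_unit_spectrum_relatively_compact
    {n : ℕ} (hn : 1 ≤ n) (H : Subgroup (GL (Fin n) ℂ))
    (hirr : ∀ W : Submodule ℂ (Fin n → ℂ),
      (∀ g ∈ H, ∀ v ∈ W, (g : Matrix (Fin n) (Fin n) ℂ).mulVec v ∈ W) → W = ⊥ ∨ W = ⊤)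
    (hell : ∀ g ∈ H, ∀ c ∈ spectrum ℂ (g : Matrix (Fin n) (Fin n) ℂ), ‖c‖ = 1) :
    IsCompact (closure (H : Set (GL (Fin n) ℂ))) := by
  classical
  obtain ⟨C, hC⟩ := entry_bound H hn hirr hell
  set M := Matrix (Fin n) (Fin n) ℂ with hM
  have hemb : Topology.IsEmbedding (Units.embedProduct M) := Units.isEmbedding_embedProduct
  set S : Set M := Set.pi Set.univ
    (fun _ : Fin n => Set.pi Set.univ (fun _ : Fin n => Metric.closedBall (0:ℂ) C)) with hS
  have hScomp : IsCompact S :=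
    isCompact_univ_pi fun _ => isCompact_univ_pi fun _ => isCompact_closedBall _ _
  have hSmem : ∀ g ∈ H, ((g : GL (Fin n) ℂ) : M) ∈ S := by
    intro g hg i _ j _
    simpa [Metric.mem_closedBall, dist_zero_right] using hC g hg i j
  set Z : Set (M × Mᵐᵒᵖ) :=
    {p | p.1 * (unop p.2) = 1} ∩ {p | (unop p.2) * p.1 = 1} with hZ
  have hZclosed : IsClosed Z := by
    refine IsClosed.inter (isClosed_eq ?_ continuous_const) (isClosed_eq ?_ continuous_const)
    · exact continuous_fst.mul (MulOpposite.continuous_unop.comp continuous_snd)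
    · exact (MulOpposite.continuous_unop.comp continuous_snd).mul continuous_fst
  set K : Set (M × Mᵐᵒᵖ) := (S ×ˢ (op '' S)) ∩ Z with hKdef
  have hK : IsCompact K :=
    ((hScomp.prod (hScomp.image MulOpposite.continuous_op))).inter_right hZclosed
  have hKrange : K ⊆ Set.range (Units.embedProduct M) := by
    rintro ⟨A, B⟩ ⟨-, h1, h2⟩
    exact ⟨⟨A, unop B, h1, h2⟩, Prod.ext rfl (by simp [Units.embedProduct])⟩
  have himg : (Units.embedProduct M) '' (H : Set (GL (Fin n) ℂ)) ⊆ K := by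
    rintro - ⟨g, hg, rfl⟩
    refine ⟨⟨hSmem g hg, ⟨((g⁻¹ : GL (Fin n) ℂ) : M), hSmem g⁻¹ (H.inv_mem hg), rfl⟩⟩, ?_, ?_⟩
    · show (g : M) * unop (op ((g⁻¹ : GL (Fin n) ℂ) : M)) = 1
      rw [unop_op]
      exact g.mul_inv
    · show unop (op ((g⁻¹ : GL (Fin n) ℂ) : M)) * (g : M) = 1
      rw [unop_op]
      exact g.inv_mul
  have hclo : closure ((Units.embedProduct M) '' (H : Set (GL (Fin n) ℂ))) ⊆ K :=
    closure_minimal himg hK.isClosed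
  rw [hemb.isCompact_iff]
  have himage : (Units.embedProduct M) '' closure (H : Set (GL (Fin n) ℂ)) =
      closure ((Units.embedProduct M) '' (H : Set (GL (Fin n) ℂ)))
        ∩ Set.range (Units.embedProduct M) := by
    rw [hemb.closure_eq_preimage_closure_image, Set.image_preimage_eq_inter_range]
  rw [himage, Set.inter_eq_self_of_subset_left (hclo.trans hKrange)]
  exact hK.of_isClosed_subset isClosed_closure hclo
end

section
/- Let 𝔯 ⊆ M_n(ℂ) be a solvable complex Lie subalgebra (with bracket [X,Y] = XY − YX) all of whose elements are diagonalizable over ℂ. Then 𝔯 is abelian: [X, Y] = 0 for all X, Y ∈ 𝔯. -/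
open Matrix

attribute [local instance 100] LieRing.ofAssociativeRing

lemma diag_comm_eq_commutator_eq_zero {n : ℕ} {d : Fin n → ℂ}
    {a b : Matrix (Fin n) (Fin n) ℂ}
    (hcomm : ∀ i j, (d i - d j) * a i j = 0)
    (heq : Matrix.diagonal d = a * b - b * a) :
    d = 0 := by
  classical
  have ha : ∀ i j, d i ≠ d j → a i j = 0 := by
    intro i j hij
    rcases mul_eq_zero.mp (hcomm i j) with h | h
    · exact absurd (sub_eq_zero.mp h) hij
    · exact h
  funext j₀
  set S : Finset (Fin n) := Finset.univ.filter (fun i => d i = d j₀) with hS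
  have hjS : j₀ ∈ S := by simp [hS]
  have hmem : ∀ i ∈ S, d i = d j₀ := fun i hi => (Finset.mem_filter.mp hi).2
  have key : ∑ i ∈ S, (Matrix.diagonal d) i i = 0 := by
    rw [heq]
    have h1 : ∑ i ∈ S, (a * b) i i = ∑ i ∈ S, ∑ k ∈ S, a i k * b k i := by
      refine Finset.sum_congr rfl fun i hi => ?_
      rw [Matrix.mul_apply]
      refine (Finset.sum_subset S.subset_univ fun k _ hk => ?_).symm
      have hdik : d i ≠ d k := by
        rw [hmem i hi]; intro h; exact hk (by simp [hS, h.symm])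
      rw [ha i k hdik, zero_mul]
    have h2 : ∑ i ∈ S, (b * a) i i = ∑ i ∈ S, ∑ k ∈ S, b i k * a k i := by
      refine Finset.sum_congr rfl fun i hi => ?_
      rw [Matrix.mul_apply]
      refine (Finset.sum_subset S.subset_univ fun k _ hk => ?_).symm
      have hdki : d k ≠ d i := by
        rw [hmem i hi]; intro h; exact hk (by simp [hS, h])
      rw [ha k i hdki, mul_zero]
    simp only [Matrix.sub_apply, Finset.sum_sub_distrib, h1, h2]
    rw [Finset.sum_comm (s := S) (t := S) (f := fun i k => b i k * a k i)]
    simp [mul_comm]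
  have hcard : (S.card : ℂ) * d j₀ = 0 := by
    rw [← key, Finset.sum_congr rfl (fun i hi => by rw [Matrix.diagonal_apply_eq, hmem i hi])]
    simp [mul_comm]
  have hne : (S.card : ℂ) ≠ 0 := by
    simp only [ne_eq, Nat.cast_eq_zero, Finset.card_eq_zero]
    intro h; rw [h] at hjS; exact absurd hjS (Finset.notMem_empty _)
  simpa [hne] using hcard

lemma core_lemma {n : ℕ} {z x y : Matrix (Fin n) (Fin n) ℂ}
    (Q : GL (Fin n) ℂ) (d : Fin n → ℂ)
    (hz : z = (Q : Matrix (Fin n) (Fin n) ℂ) * Matrix.diagonal d * (Q⁻¹ : GL (Fin n) ℂ))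
    (hzxy : z = x * y - y * x)
    (h2 : z * (z * x - x * z) - (z * x - x * z) * z = 0) :
    z = 0 := by
  set u : Matrix (Fin n) (Fin n) ℂ := (Q : Matrix (Fin n) (Fin n) ℂ) with hu'
  set v : Matrix (Fin n) (Fin n) ℂ := ((Q⁻¹ : GL (Fin n) ℂ) : Matrix (Fin n) (Fin n) ℂ) with hv'
  have huv : u * v = 1 := Units.mul_inv Q
  have hvu : v * u = 1 := Units.inv_mul Q
  have hmid : ∀ m : Matrix (Fin n) (Fin n) ℂ, u * (v * m) = m := fun m => by
    rw [← mul_assoc, huv, one_mul]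
  have conj_mul : ∀ m₁ m₂ : Matrix (Fin n) (Fin n) ℂ,
      v * (m₁ * m₂) * u = (v * m₁ * u) * (v * m₂ * u) := by
    intro m₁ m₂
    simp only [mul_assoc, hmid]
  have hvzu : v * z * u = Matrix.diagonal d := by
    rw [hz]
    simp only [mul_assoc]
    rw [hvu, mul_one, ← mul_assoc, hvu, one_mul]
  have h2' : (Matrix.diagonal d) * ((Matrix.diagonal d) * (v * x * u) - (v * x * u) * (Matrix.diagonal d))
      - ((Matrix.diagonal d) * (v * x * u) - (v * x * u) * (Matrix.diagonal d)) * (Matrix.diagonal d) = 0 := by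
    have h := congrArg (fun m => v * m * u) h2
    simp only [Matrix.mul_sub, Matrix.sub_mul, Matrix.mul_zero, Matrix.zero_mul, conj_mul,
      hvzu] at h
    simp only [Matrix.mul_sub, Matrix.sub_mul]
    exact h
  have key : ∀ i j, (d i - d j) * (v * x * u) i j = 0 := by
    intro i j
    have hentry := congrFun (congrFun h2' i) j
    simp only [Matrix.sub_apply, Matrix.mul_sub, Matrix.sub_mul, Matrix.diagonal_mul,
      Matrix.mul_diagonal, Matrix.zero_apply] at hentry
    have e0 : (d i - d j) * ((d i - d j) * (v * x * u) i j) = 0 := by linear_combination hentry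
    rcases mul_eq_zero.mp e0 with h | h
    · rw [h, zero_mul]
    · exact h
  have hDab : Matrix.diagonal d = (v * x * u) * (v * y * u) - (v * y * u) * (v * x * u) := by
    have h := congrArg (fun m => v * m * u) hzxy
    simp only [Matrix.mul_sub, Matrix.sub_mul, conj_mul, hvzu] at h
    exact h
  have hd : d = 0 := diag_comm_eq_commutator_eq_zero key hDab
  have hd0 : Matrix.diagonal (0 : Fin n → ℂ) = 0 := by
    funext i j
    simp [Matrix.diagonal_apply]
  rw [hz, hd, hd0, mul_zero, zero_mul]

/-- A solvable complex Lie subalgebra of `M_n(ℂ)` (with the commutator bracket) all of whose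
elements are diagonalizable over `ℂ` is abelian. -/
theorem solvable_diagonalizable_subalgebra_abelian
    {n : ℕ} (𝔯 : LieSubalgebra ℂ (Matrix (Fin n) (Fin n) ℂ))
    (hsolv : LieAlgebra.IsSolvable ↥𝔯)
    (hdiag : ∀ X ∈ 𝔯, ∃ (Q : GL (Fin n) ℂ) (d : Fin n → ℂ),
      X = (Q : Matrix (Fin n) (Fin n) ℂ) * Matrix.diagonal d * (Q⁻¹ : GL (Fin n) ℂ)) :
    ∀ X ∈ 𝔯, ∀ Y ∈ 𝔯, ⁅X, Y⁆ = 0 := by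
  have step : ∀ j : ℕ,
      (∀ a b : ↥𝔯, a ∈ LieAlgebra.derivedSeries ℂ ↥𝔯 (j+1) →
        b ∈ LieAlgebra.derivedSeries ℂ ↥𝔯 (j+1) → ⁅a, b⁆ = 0) →
      (∀ a b : ↥𝔯, a ∈ LieAlgebra.derivedSeries ℂ ↥𝔯 j →
        b ∈ LieAlgebra.derivedSeries ℂ ↥𝔯 j → ⁅a, b⁆ = 0) := by
    intro j hab X Y hX hY
    obtain ⟨Z, hZdef⟩ : ∃ Z : ↥𝔯, Z = ⁅X, Y⁆ := ⟨_, rfl⟩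
    suffices hz : Z = 0 by rw [← hZdef, hz]
    have hZ : Z ∈ LieAlgebra.derivedSeries ℂ ↥𝔯 (j+1) := by
      rw [hZdef, LieAlgebra.derivedSeries_def, LieAlgebra.derivedSeriesOfIdeal_succ]
      rw [LieAlgebra.derivedSeries_def] at hX hY
      exact LieSubmodule.lie_mem_lie hX hY
    have hW : ⁅Z, X⁆ ∈ LieAlgebra.derivedSeries ℂ ↥𝔯 (j+1) :=
      lie_mem_left ℂ ↥𝔯 _ Z X hZ
    have hZZ : ⁅Z, ⁅Z, X⁆⁆ = 0 := hab Z ⁅Z, X⁆ hZ hW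
    obtain ⟨Q, dd, hQ⟩ := hdiag (Z : Matrix (Fin n) (Fin n) ℂ) Z.2
    have hz0 : (Z : Matrix (Fin n) (Fin n) ℂ) = 0 := by
      refine core_lemma (x := (X : Matrix (Fin n) (Fin n) ℂ))
        (y := (Y : Matrix (Fin n) (Fin n) ℂ)) Q dd hQ ?_ ?_
      · rw [hZdef]
        rw [LieSubalgebra.coe_bracket, Ring.lie_def]
      · have e1 : ((⁅Z, ⁅Z, X⁆⁆ : ↥𝔯) : Matrix (Fin n) (Fin n) ℂ) = 0 := by
          rw [hZZ]; rfl
        rw [LieSubalgebra.coe_bracket, LieSubalgebra.coe_bracket, Ring.lie_def, Ring.lie_def] at e1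
        exact e1
    exact Subtype.ext hz0
  have desc : ∀ m : ℕ,
      (∀ a b : ↥𝔯, a ∈ LieAlgebra.derivedSeries ℂ ↥𝔯 m →
        b ∈ LieAlgebra.derivedSeries ℂ ↥𝔯 m → ⁅a, b⁆ = 0) →
      (∀ a b : ↥𝔯, a ∈ LieAlgebra.derivedSeries ℂ ↥𝔯 0 →
        b ∈ LieAlgebra.derivedSeries ℂ ↥𝔯 0 → ⁅a, b⁆ = 0) := by
    intro m
    induction m with
    | zero => exact id
    | succ p ih => intro h; exact ih (step p h)
  obtain ⟨k, hk⟩ := (LieAlgebra.isSolvable_iff ℂ ↥𝔯).mp hsolv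
  have habk : ∀ a b : ↥𝔯, a ∈ LieAlgebra.derivedSeries ℂ ↥𝔯 k →
      b ∈ LieAlgebra.derivedSeries ℂ ↥𝔯 k → ⁅a, b⁆ = 0 := by
    intro a b ha _
    rw [hk] at ha
    rw [(LieSubmodule.mem_bot _).mp ha]
    simp
  have final := desc k habk
  intro X hX Y hY
  have h := final ⟨X, hX⟩ ⟨Y, hY⟩
    (by rw [LieAlgebra.derivedSeries_def, LieAlgebra.derivedSeriesOfIdeal_zero]
        exact LieSubmodule.mem_top _)
    (by rw [LieAlgebra.derivedSeries_def, LieAlgebra.derivedSeriesOfIdeal_zero]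
        exact LieSubmodule.mem_top _)
  exact congrArg Subtype.val h
end
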